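/- arXiv:2004.02061 — 13 statements merged into one kernel-verified Lean document; each statement's English description precedes it below -/
import Mathlib

section
/- Let G be a finite group and let (G,N,M) be a Frobenius triple, i.e., M and N are nontrivial proper normal subgroups of G with M ≤ N and C_G(x) ≤ N for every nonidentity element x ∈ M. Then (G,N,M) is a Camina triple: for every g ∈ G \ N and every m ∈ M, the element gm is conjugate in G to g. -/
/-- `(G, N, M)` is a Frobenius triple: `M` and `N` are nontrivial proper normal
subgroups of `G` with `M ≤ N`, and `C_G(x) ≤ N` for every nonidentity `x ∈ M`. -/
def IsFrobeniusTriple {G : Type*} [Group G] (N M : Subgroup G) : Prop :=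
  N.Normal ∧ M.Normal ∧ N ≠ ⊥ ∧ N ≠ ⊤ ∧ M ≠ ⊥ ∧ M ≠ ⊤ ∧ M ≤ N ∧
    ∀ x ∈ M, x ≠ 1 → Subgroup.centralizer {x} ≤ N

/-- `(G, N, M)` is a Camina triple: `M` and `N` are nontrivial proper normal
subgroups of `G` with `M ≤ N`, and every `g ∈ G \ N` is conjugate to `g * m`
for every `m ∈ M`. -/
def IsCaminaTriple {G : Type*} [Group G] (N M : Subgroup G) : Prop :=
  N.Normal ∧ M.Normal ∧ N ≠ ⊥ ∧ N ≠ ⊤ ∧ M ≠ ⊥ ∧ M ≠ ⊤ ∧ M ≤ N ∧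
    ∀ g : G, g ∉ N → ∀ m ∈ M, IsConj g (g * m)

theorem frobenius_triple_is_camina_triple {G : Type*} [Group G] [Fintype G]
    (N M : Subgroup G) (h : IsFrobeniusTriple N M) : IsCaminaTriple N M := by
  obtain ⟨hN, hM, hNb, hNt, hMb, hMt, hMN, hcent⟩ := h
  refine ⟨hN, hM, hNb, hNt, hMb, hMt, hMN, fun g hg m hm => ?_⟩
  -- the map x ↦ g⁻¹ * x⁻¹ * g * x on M is injective, hence surjective
  have hmem : ∀ x : M, g⁻¹ * (x : G)⁻¹ * g * x ∈ M := by
    intro x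
    have h1 : g⁻¹ * (x : G)⁻¹ * g ∈ M := by
      have := hM.conj_mem _ (M.inv_mem x.2) g⁻¹
      simpa using this
    exact M.mul_mem h1 x.2
  let φ : M → M := fun x => ⟨g⁻¹ * (x : G)⁻¹ * g * x, hmem x⟩
  have hinj : Function.Injective φ := by
    intro x y hxy
    have heq : g⁻¹ * (x : G)⁻¹ * g * x = g⁻¹ * (y : G)⁻¹ * g * y :=
      congrArg Subtype.val hxy
    have h2 : (x : G)⁻¹ * g * x = (y : G)⁻¹ * g * y := by
      have := congrArg (fun t => g * t) heq
      simpa [mul_assoc] using this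
    have hc : (y : G) * (x : G)⁻¹ * g = g * ((y : G) * (x : G)⁻¹) := by
      have := congrArg (fun t => (y : G) * t * (x : G)⁻¹) h2
      simp only [mul_assoc] at this
      simp only [mul_inv_cancel, mul_one, inv_mul_cancel_left] at this
      simp [mul_assoc, this]
    by_contra hne
    have hne1 : (y : G) * (x : G)⁻¹ ≠ 1 := by
      intro h1
      apply hne
      have : (y : G) = (x : G) := by
        have := congrArg (fun t => t * (x : G)) h1
        simpa [mul_assoc] using this
      exact Subtype.ext this.symm ▸ rfl
    have hmem' : (y : G) * (x : G)⁻¹ ∈ M := M.mul_mem y.2 (M.inv_mem x.2)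
    have : g ∈ Subgroup.centralizer {(y : G) * (x : G)⁻¹} := by
      rw [Subgroup.mem_centralizer_iff]
      intro z hz
      rw [Set.mem_singleton_iff] at hz
      subst hz
      exact hc
    exact hg (hcent _ hmem' hne1 this)
  have hsurj : Function.Surjective φ := Finite.surjective_of_injective hinj
  obtain ⟨x, hx⟩ := hsurj ⟨m, hm⟩
  have hx' : g⁻¹ * (x : G)⁻¹ * g * x = m := congrArg Subtype.val hx
  rw [isConj_iff]
  exact ⟨(x : G)⁻¹, by rw [← hx']; group⟩
end

section
/- Let G be a finite group and let (G,N,M) be a Camina triple. Then (G,N,M) is a Frobenius triple if and only if the index |G : N| is coprime to the order |M|. -/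
theorem camina_triple_frobenius_iff_coprime {G : Type*} [Group G] [Fintype G]
    (N M : Subgroup G) (h : IsCaminaTriple N M) :
    IsFrobeniusTriple N M ↔ Nat.Coprime N.index (Nat.card M) := by
  obtain ⟨hNn, hMn, hNbot, hNtop, hMbot, hMtop, hMN, hcam⟩ := h
  constructor
  · -- Frobenius → coprime
    rintro ⟨-, -, -, -, -, -, -, hcent⟩
    by_contra hnc
    set d := Nat.gcd N.index (Nat.card M) with hd
    have hd1 : d ≠ 1 := hnc
    set p := d.minFac with hp
    have hpp : p.Prime := Nat.minFac_prime hd1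
    haveI : Fact p.Prime := ⟨hpp⟩
    have hpN : p ∣ N.index := dvd_trans (Nat.minFac_dvd d) (Nat.gcd_dvd_left _ _)
    have hpM : p ∣ Nat.card M := dvd_trans (Nat.minFac_dvd d) (Nat.gcd_dvd_right _ _)
    obtain ⟨P⟩ : Nonempty (Sylow p G) := inferInstance
    haveI := hMn
    -- action of P on M by conjugation
    letI : MulAction P M :=
      MulAction.compHom M ((MulAut.conjNormal (H := M)).comp (P : Subgroup G).subtype)
    have hPp : IsPGroup p P := P.isPGroup'
    have h1fix : (1 : M) ∈ MulAction.fixedPoints P M := by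
      intro t
      show MulAut.conjNormal ((P : Subgroup G).subtype t) (1 : M) = 1
      exact map_one _
    obtain ⟨b, hbfix, hb1⟩ :=
      hPp.exists_fixed_point_of_prime_dvd_card_of_fixed_point (α := M) hpM h1fix
    have hPle : (P : Subgroup G) ≤ Subgroup.centralizer {(b : G)} := by
      intro t ht
      rw [Subgroup.mem_centralizer_iff]
      rintro y rfl
      have := hbfix ⟨t, ht⟩
      have hco : MulAut.conjNormal t b = b := this
      have : (↑(MulAut.conjNormal t b) : G) = b := by rw [hco]
      rw [MulAut.conjNormal_apply] at this
      calc (b : G) * t = (t * b * t⁻¹) * t := by rw [this]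
        _ = t * b := by group
    have hPN : (P : Subgroup G) ≤ N :=
      le_trans hPle (hcent (b : G) b.2 (fun hb => hb1 (Subtype.ext hb.symm)))
    have hdvd : N.index ∣ (P : Subgroup G).index := Subgroup.index_dvd_of_le hPN
    exact P.not_dvd_index (hpN.trans hdvd)
  · -- coprime → Frobenius
    intro hco
    refine ⟨hNn, hMn, hNbot, hNtop, hMbot, hMtop, hMN, ?_⟩
    intro x hxM hx1 g hg
    by_contra hgN
    rw [Subgroup.mem_centralizer_iff] at hg
    have hgx : x * g = g * x := hg x rfl
    -- find a prime-order power y of x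
    have hxo : 1 < orderOf x :=
      lt_of_le_of_ne (orderOf_pos x) (fun hc => hx1 (orderOf_eq_one_iff.mp hc.symm))
    set p := (orderOf x).minFac with hp
    have hpp : p.Prime := Nat.minFac_prime (by omega)
    haveI : Fact p.Prime := ⟨hpp⟩
    set y := x ^ (orderOf x / p) with hy
    have hyo : orderOf y = p := by
      rw [hy, orderOf_pow]
      have hdvd : orderOf x / p ∣ orderOf x := Nat.div_dvd_of_dvd (Nat.minFac_dvd _)
      rw [Nat.gcd_eq_right hdvd]
      exact Nat.div_div_self (Nat.minFac_dvd _) (by omega)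
    have hyM : y ∈ M := M.pow_mem hxM _
    have hy1 : y ≠ 1 := by
      intro hcon
      rw [hcon, orderOf_one] at hyo
      exact hpp.ne_one hyo.symm
    have hgy : Commute g y := (Commute.pow_right ((hgx.symm : g * x = x * g)) _)
    -- p divides card M
    have hpM : p ∣ Nat.card M := by
      have : orderOf (⟨y, hyM⟩ : M) = orderOf y := by
        rw [← Subgroup.orderOf_coe]
      rw [← hyo, ← this]
      exact orderOf_dvd_natCard _
    have hpN : ¬ p ∣ N.index := fun hdvd =>
      hpp.one_lt.ne' (Nat.eq_one_of_dvd_coprimes hco hdvd hpM)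
    -- the p'-part of g
    set k := orderOf g with hk
    have hk0 : k ≠ 0 := (orderOf_pos g).ne'
    set a := k.factorization p with ha
    set hh := g ^ (p ^ a) with hhh
    have hho : orderOf hh = k / p ^ a := by
      rw [hhh, orderOf_pow, ← hk, Nat.gcd_eq_right (Nat.ordProj_dvd k p)]
    have hpho : ¬ p ∣ orderOf hh := by
      rw [hho]
      exact Nat.not_dvd_ordCompl hpp hk0
    -- hh ∉ N
    haveI := hNn
    have hhN : hh ∉ N := by
      intro hmem
      have hgq : (g : G ⧸ N) ≠ (1 : G ⧸ N) := by
        rw [Ne, QuotientGroup.eq_one_iff]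
        exact hgN
      have hqord : ¬ p ∣ orderOf ((g : G) : G ⧸ N) := by
        intro hdvd
        apply hpN
        refine hdvd.trans ?_
        rw [Subgroup.index_eq_card]
        exact orderOf_dvd_natCard _
      have hcopr : (orderOf ((g : G) : G ⧸ N)).Coprime (p ^ a) :=
        Nat.Coprime.pow_right _ ((hpp.coprime_iff_not_dvd.mpr hqord).symm)
      have : ((g : G) : G ⧸ N) ^ (p ^ a) = 1 := by
        rw [← QuotientGroup.mk_pow, QuotientGroup.eq_one_iff]
        exact hmem
      have := orderOf_dvd_of_pow_eq_one this
      have h1 : orderOf ((g : G) : G ⧸ N) = 1 := Nat.eq_one_of_dvd_coprimes hcopr dvd_rfl this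
      exact hgq (orderOf_eq_one_iff.mp h1)
    -- Camina gives conjugacy, hence equal orders, contradiction
    have hconj : IsConj hh (hh * y) := hcam hh hhN y hyM
    obtain ⟨c, hc⟩ := hconj
    have horder : orderOf hh = orderOf (hh * y) := hc.orderOf_eq
    have hhy : Commute hh y := Commute.pow_left hgy _
    have hcop : (orderOf hh).Coprime (orderOf y) := by
      rw [hyo]
      exact (hpp.coprime_iff_not_dvd.mpr hpho).symm
    rw [hhy.orderOf_mul_eq_mul_orderOf_of_coprime hcop, hyo] at horder
    have hhpos : 0 < orderOf hh := orderOf_pos hh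
    nlinarith [hpp.one_lt]
end

section
/- Let M and N be normal subgroups of a finite group G such that |G : N| is coprime to |M|. Then M ≤ N, and there exists a subgroup H ≤ G such that G = HN and H ∩ M = 1. -/
/-! Take `H` minimal among the subgroups with `H ⊔ N = ⊤`. If a prime `p ∤ |G : N|` divided
`|H|`, a Sylow `p`-subgroup `P` of `H` would lie in `N ⊓ H`; the Frattini argument gives
`N_H(P) ⊔ (N ⊓ H) = H`, so `P ⊴ H` by minimality, and a Schur–Zassenhaus complement of `P` in
`H` again supplements `N`, forcing `P = ⊥`. Hence every prime divisor of `|H|` divides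
`|G : N|`, which is coprime to `|M|`, so `H ⊓ M = ⊥`. -/

namespace Subgroup

variable {G : Type*} [Group G]

theorem le_of_coprime_index_card {N K : Subgroup G} [N.Normal]
    (h : Nat.Coprime N.index (Nat.card K)) : K ≤ N := by
  have hdvd_card : Nat.card (K.map (QuotientGroup.mk' N)) ∣ Nat.card K :=
    card_dvd_of_surjective _ ((QuotientGroup.mk' N).subgroupMap_surjective K)
  have hdvd_index : Nat.card (K.map (QuotientGroup.mk' N)) ∣ N.index :=
    card_subgroup_dvd_card _
  have hbot : K.map (QuotientGroup.mk' N) = ⊥ :=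
    card_eq_one.mp (Nat.eq_one_of_dvd_coprimes h hdvd_index hdvd_card)
  simpa using (map_eq_bot_iff K).mp hbot

theorem prime_dvd_index_of_forall_sup_eq_top [Finite G] {N : Subgroup G} [N.Normal]
    (hmin : ∀ T : Subgroup G, T ⊔ N = ⊤ → T = ⊤) {p : ℕ} (hp : p.Prime)
    (hpG : p ∣ Nat.card G) : p ∣ N.index := by
  have : Fact p.Prime := ⟨hp⟩
  by_contra hpN
  obtain ⟨P⟩ : Nonempty (Sylow p G) := inferInstance
  have hPN : (P : Subgroup G) ≤ N := by
    obtain ⟨k, hk⟩ := IsPGroup.iff_card.mp P.2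
    refine le_of_coprime_index_card ?_
    rw [hk]
    exact (hp.coprime_iff_not_dvd.mpr hpN).symm.pow_right k
  have : (P : Subgroup G).Normal :=
    normalizer_eq_top_iff.mp (hmin _ (Sylow.normalizer_sup_eq_top' P hPN))
  obtain ⟨K, hK⟩ := exists_right_complement'_of_coprime P.card_coprime_index
  have hKN : K ⊔ N = ⊤ :=
    top_le_iff.mp (hK.sup_eq_top ▸ sup_le (hPN.trans le_sup_right) le_sup_left)
  rw [hmin K hKN, isComplement'_top_right] at hK
  exact P.ne_bot_of_dvd_card hpG hK

theorem subgroupOf_eq_top_of_minimal_sup_eq_top {N H : Subgroup G}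
    (hH : Minimal (fun K : Subgroup G ↦ K ⊔ N = ⊤) H) (T : Subgroup H)
    (hT : T ⊔ N.subgroupOf H = ⊤) : T = ⊤ := by
  have hH_le : H ≤ T.map H.subtype ⊔ N := by
    have hmap := congrArg (map H.subtype) hT
    rw [map_sup, subgroupOf_map_subtype, ← MonoidHom.range_eq_map, range_subtype] at hmap
    calc H = T.map H.subtype ⊔ N ⊓ H := hmap.symm
      _ ≤ T.map H.subtype ⊔ N := sup_le_sup_left inf_le_left _
  have hsup : T.map H.subtype ⊔ N = ⊤ :=
    top_le_iff.mp (hH.prop ▸ sup_le hH_le le_sup_right)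
  have hmap : T.map H.subtype = H := hH.eq_of_le hsup (map_subtype_le T)
  rw [eq_top_iff, ← map_subtype_le_map_subtype, ← MonoidHom.range_eq_map, range_subtype]
  exact hmap.ge

end Subgroup

theorem exists_pseudo_complement_of_coprime_general {G : Type*} [Group G] [Fintype G]
    (M N : Subgroup G) (hN : N.Normal)
    (hco : Nat.Coprime N.index (Nat.card M)) :
    M ≤ N ∧ ∃ H : Subgroup G, (∀ g : G, ∃ h ∈ H, ∃ n ∈ N, g = h * n) ∧ H ⊓ M = ⊥ := by
  obtain ⟨H, -, hH⟩ :=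
    exists_minimal_le_of_wellFoundedLT (fun K : Subgroup G ↦ K ⊔ N = ⊤) ⊤ (top_sup_eq N)
  have hH_index : ∀ p, p.Prime → p ∣ Nat.card H → p ∣ N.index := fun p hp hpH ↦
    (Subgroup.prime_dvd_index_of_forall_sup_eq_top
      (Subgroup.subgroupOf_eq_top_of_minimal_sup_eq_top hH) hp hpH).trans
      (N.relIndex_dvd_index_of_normal H)
  have hHM : H ⊓ M = ⊥ := by
    rw [← Subgroup.card_eq_one]
    by_contra hne
    obtain ⟨p, hp, hpHM⟩ := Nat.exists_prime_and_dvd hne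
    have hpN := hH_index p hp (hpHM.trans (Subgroup.card_dvd_of_le inf_le_left))
    have hpM := hpHM.trans (Subgroup.card_dvd_of_le inf_le_right)
    exact hp.ne_one (Nat.eq_one_of_dvd_coprimes hco hpN hpM)
  refine ⟨Subgroup.le_of_coprime_index_card hco, H, fun g ↦ ?_, hHM⟩
  obtain ⟨h, hh, n, hn, rfl⟩ :=
    Subgroup.mem_sup_of_normal_right.mp (hH.prop ▸ Subgroup.mem_top g)
  exact ⟨h, hh, n, hn, rfl⟩

theorem exists_pseudo_complement_of_coprime {G : Type*} [Group G] [Fintype G]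
    (M N : Subgroup G) (hM : M.Normal) (hN : N.Normal)
    (hco : Nat.Coprime N.index (Nat.card M)) :
    M ≤ N ∧ ∃ H : Subgroup G, (∀ g : G, ∃ h ∈ H, ∃ n ∈ N, g = h * n) ∧ H ⊓ M = ⊥ :=
  exists_pseudo_complement_of_coprime_general M N hN hco
end

section
/- Let (G,N,M) be a Frobenius triple in a finite group G, and let H ≤ G be a subgroup satisfying G = HN and H ∩ M = 1. Then (HM, (H ∩ N)M, M) is a Frobenius triple; that is, M and (H ∩ N)M are nontrivial proper normal subgroups of HM with M ≤ (H ∩ N)M, and C_{HM}(x) ≤ (H ∩ N)M for every nonidentity x ∈ M. -/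
/-!
Since `M` is normal and `M ≤ N`, Dedekind's modular law gives `(H ∩ N)M = HM ∩ N`, so the
triple in question is `(HM, HM ∩ N, M)`. Intersecting a Frobenius triple with any subgroup `K`
that contains `M` but is not contained in `N` yields again a Frobenius triple, and `HM ⊄ N`
because `G = HN ≠ N`.
-/

section

variable {G : Type*} [Group G]

namespace Subgroup

theorem sup_normal_inf_eq_of_le (H : Subgroup G) {M N : Subgroup G} [M.Normal] (hMN : M ≤ N) :
    (H ⊔ M) ⊓ N = H ⊓ N ⊔ M := by
  apply SetLike.coe_injective
  rw [coe_inf, mul_normal, mul_normal, inf_comm H N, inf_mul_assoc N H M hMN, Set.inter_comm]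

end Subgroup

theorem IsFrobeniusTriple.subgroupOf {N M K : Subgroup G} (hF : IsFrobeniusTriple N M)
    (hMK : M ≤ K) (hKN : ¬ K ≤ N) :
    IsFrobeniusTriple (N.subgroupOf K) (M.subgroupOf K) := by
  obtain ⟨hN, hM, -, -, hMbot, -, hMN, hcent⟩ := hF
  have hMK_ne_bot : M.subgroupOf K ≠ ⊥ := by
    rwa [Ne, Subgroup.subgroupOf_eq_bot, disjoint_of_le_iff_left_eq_bot hMK]
  refine ⟨hN.subgroupOf K, hM.subgroupOf K, ?_, ?_, hMK_ne_bot, ?_,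
    Subgroup.subgroupOf_mono K hMN, ?_⟩
  · exact ne_bot_of_le_ne_bot hMK_ne_bot (Subgroup.subgroupOf_mono K hMN)
  · rwa [Ne, Subgroup.subgroupOf_eq_top]
  · rw [Ne, Subgroup.subgroupOf_eq_top]
    exact fun hKM => hKN (hKM.trans hMN)
  · intro x hx hx1 y hy
    refine hcent x hx (by simpa using hx1) (Subgroup.mem_centralizer_singleton_iff.mpr ?_)
    exact congrArg Subtype.val (Subgroup.mem_centralizer_singleton_iff.mp hy)

end

theorem frobenius_triple_pseudo_complement_restrict_general {G : Type*} [Group G]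
    (N M : Subgroup G) (hF : IsFrobeniusTriple N M) (H : Subgroup G)
    (hHN : ∀ g : G, ∃ h ∈ H, ∃ n ∈ N, g = h * n) :
    IsFrobeniusTriple (((H ⊓ N) ⊔ M).subgroupOf (H ⊔ M)) (M.subgroupOf (H ⊔ M)) := by
  have ⟨_, hM, _, hN_ne_top, _, _, hMN, _⟩ := hF
  have hH_not_le : ¬ H ≤ N := fun hHle => hN_ne_top <| eq_top_iff.mpr fun g _ => by
    obtain ⟨h, hh, n, hn, rfl⟩ := hHN g
    exact N.mul_mem (hHle hh) hn
  rw [← Subgroup.sup_normal_inf_eq_of_le H hMN, Subgroup.inf_subgroupOf_left]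
  exact hF.subgroupOf le_sup_right fun hle => hH_not_le (le_sup_left.trans hle)

theorem frobenius_triple_pseudo_complement_restrict {G : Type*} [Group G] [Fintype G]
    (N M : Subgroup G) (hF : IsFrobeniusTriple N M) (H : Subgroup G)
    (hHN : ∀ g : G, ∃ h ∈ H, ∃ n ∈ N, g = h * n) (hHM : H ⊓ M = ⊥) :
    IsFrobeniusTriple (((H ⊓ N) ⊔ M).subgroupOf (H ⊔ M)) (M.subgroupOf (H ⊔ M)) :=
  frobenius_triple_pseudo_complement_restrict_general N M hF H hHN
end

section
/- Let M ≤ N be proper nontrivial normal subgroups of a finite group G, and let H ≤ G be a subgroup with G = HN and H ∩ M = 1. Then (HM, (H ∩ N)M, M) is a Frobenius triple if and only if (HM, H, H ∩ N) is a Frobenius–Wielandt triple, i.e., H ∩ N is a proper normal subgroup of H and H^g ∩ H ≤ H ∩ N for every g ∈ HM \ H. -/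
open scoped Pointwise

theorem frobenius_triple_iff_frobenius_wielandt_in_HM {G : Type*} [Group G] [Fintype G]
    (N M : Subgroup G) (hM : M.Normal) (hN : N.Normal)
    (hMbot : M ≠ ⊥) (hMtop : M ≠ ⊤) (hNbot : N ≠ ⊥) (hNtop : N ≠ ⊤) (hMN : M ≤ N)
    (H : Subgroup G) (hHN : ∀ g : G, ∃ h ∈ H, ∃ n ∈ N, g = h * n) (hHM : H ⊓ M = ⊥) :
    IsFrobeniusTriple (((H ⊓ N) ⊔ M).subgroupOf (H ⊔ M)) (M.subgroupOf (H ⊔ M)) ↔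
      (H ⊓ N < H ∧ ((H ⊓ N).subgroupOf H).Normal ∧
        ∀ g ∈ H ⊔ M, g ∉ H → ∀ x ∈ H, g * x * g⁻¹ ∈ H → x ∈ N) := by
  classical
  have hmemK : ∀ g : G, g ∈ H ⊔ M ↔ ∃ h ∈ H, ∃ m ∈ M, h * m = g := by
    intro g
    rw [← SetLike.mem_coe, Subgroup.mul_normal H M]
    exact Set.mem_mul
  have hHK : H ≤ H ⊔ M := le_sup_left
  have hMK : M ≤ H ⊔ M := le_sup_right
  have hN'le : (H ⊓ N) ⊔ M ≤ N := sup_le inf_le_right hMN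
  have hHM1 : ∀ a : G, a ∈ H → a ∈ M → a = 1 := by
    intro a ha hm
    have : a ∈ H ⊓ M := ⟨ha, hm⟩
    rwa [hHM, Subgroup.mem_bot] at this
  have hN'mem : ∀ g ∈ H ⊔ M, (g ∈ (H ⊓ N) ⊔ M ↔ g ∈ N) := by
    intro g hg
    refine ⟨fun h => hN'le h, fun hgN => ?_⟩
    obtain ⟨h, hh, m, hm, rfl⟩ := (hmemK g).mp hg
    have hhN : h ∈ N := by
      have he : h = (h * m) * m⁻¹ := by group
      rw [he]
      exact mul_mem hgN (inv_mem (hMN hm))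
    exact mul_mem ((le_sup_left : H ⊓ N ≤ (H ⊓ N) ⊔ M) ⟨hh, hhN⟩)
      ((le_sup_right : M ≤ (H ⊓ N) ⊔ M) hm)
  obtain ⟨g₀, hg₀⟩ : ∃ g : G, g ∉ N := by
    by_contra hc
    push_neg at hc
    exact hNtop ((Subgroup.eq_top_iff' N).mpr hc)
  obtain ⟨h₀, hh₀H, n₀, hn₀, hgeq₀⟩ := hHN g₀
  have hh₀N : h₀ ∉ N := by
    intro hcon
    exact hg₀ (by rw [hgeq₀]; exact mul_mem hcon hn₀)
  obtain ⟨m₀, hm₀M, hm₀1⟩ : ∃ m ∈ M, m ≠ 1 := by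
    by_contra hc
    push_neg at hc
    exact hMbot ((Subgroup.eq_bot_iff_forall M).mpr hc)
  constructor
  · rintro ⟨-, -, -, -, -, -, -, hcent⟩
    refine ⟨lt_of_le_of_ne inf_le_left fun he => ?_, ?_, ?_⟩
    · rw [← he] at hh₀H
      exact hh₀N (Subgroup.mem_inf.mp hh₀H).2
    · constructor
      intro n hn g
      rw [Subgroup.mem_subgroupOf, Subgroup.mem_inf] at hn ⊢
      push_cast
      exact ⟨mul_mem (mul_mem g.2 hn.1) (inv_mem g.2), hN.conj_mem _ hn.2 ↑g⟩
    · intro g hgK hgH a haH hconj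
      obtain ⟨h, hh, m, hm, hgeq⟩ := (hmemK g).mp hgK
      have hm1 : m ≠ 1 := by
        rintro rfl
        rw [mul_one] at hgeq
        exact hgH (hgeq ▸ hh)
      have h1 : h⁻¹ * (g * a * g⁻¹) * h ∈ H := mul_mem (mul_mem (inv_mem hh) hconj) hh
      have h2 : h⁻¹ * (g * a * g⁻¹) * h = m * a * m⁻¹ := by rw [← hgeq]; group
      rw [h2] at h1
      have hd : a⁻¹ * (m * a * m⁻¹) = 1 := by
        apply hHM1
        · exact mul_mem (inv_mem haH) h1
        · have he : a⁻¹ * (m * a * m⁻¹) = (a⁻¹ * m * a) * m⁻¹ := by group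
          rw [he]
          exact mul_mem (by simpa using hM.conj_mem m hm a⁻¹) (inv_mem hm)
      have hcomm : m * a = a * m := by
        have h3 := inv_mul_eq_one.mp hd
        calc m * a = (m * a * m⁻¹) * m := by group
          _ = a * m := by rw [← h3]
      have hxK : m ∈ H ⊔ M := hMK hm
      have haK : a ∈ H ⊔ M := hHK haH
      have hres := hcent ⟨m, hxK⟩ (by rwa [Subgroup.mem_subgroupOf])
        (fun hc => hm1 (by simpa using congrArg Subtype.val hc))
        (show (⟨a, haK⟩ : ↥(H ⊔ M)) ∈ Subgroup.centralizer {(⟨m, hxK⟩ : ↥(H ⊔ M))} from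
          Subgroup.mem_centralizer_iff.mpr (by
            rintro y hy
            rw [Set.mem_singleton_iff] at hy
            subst hy
            exact Subtype.ext hcomm))
      rw [Subgroup.mem_subgroupOf] at hres
      exact (hN'mem a haK).mp hres
  · rintro ⟨hlt, hnorm, hcond⟩
    have hfpf : ∀ h ∈ H, h ∉ N → ∀ y ∈ M, y * h = h * y → y = 1 := by
      intro h hh hhN y hy hcomm
      by_contra hy1
      apply hhN
      refine hcond y (hMK hy) (fun hyH => hy1 (hHM1 y hyH hy)) h hh ?_
      have he : y * h * y⁻¹ = h := by rw [hcomm]; group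
      rw [he]
      exact hh
    refine ⟨?_, hM.subgroupOf _, ?_, ?_, ?_, ?_, ?_, ?_⟩
    · have hN'eq : ((H ⊓ N) ⊔ M).subgroupOf (H ⊔ M) = N.subgroupOf (H ⊔ M) := by
        ext x
        simp only [Subgroup.mem_subgroupOf]
        exact hN'mem ↑x x.2
      rw [hN'eq]
      exact hN.subgroupOf _
    · intro hbot
      have hmem : (⟨m₀, hMK hm₀M⟩ : ↥(H ⊔ M)) ∈ ((H ⊓ N) ⊔ M).subgroupOf (H ⊔ M) := by
        rw [Subgroup.mem_subgroupOf]
        exact (le_sup_right : M ≤ (H ⊓ N) ⊔ M) hm₀M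
      rw [hbot, Subgroup.mem_bot] at hmem
      exact hm₀1 (by simpa using congrArg Subtype.val hmem)
    · intro htop
      have hmem : (⟨h₀, hHK hh₀H⟩ : ↥(H ⊔ M)) ∈ ((H ⊓ N) ⊔ M).subgroupOf (H ⊔ M) := by
        rw [htop]
        exact Subgroup.mem_top _
      rw [Subgroup.mem_subgroupOf] at hmem
      exact hh₀N (hN'le hmem)
    · intro hbot
      have hmem : (⟨m₀, hMK hm₀M⟩ : ↥(H ⊔ M)) ∈ M.subgroupOf (H ⊔ M) := by
        rw [Subgroup.mem_subgroupOf]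
        exact hm₀M
      rw [hbot, Subgroup.mem_bot] at hmem
      exact hm₀1 (by simpa using congrArg Subtype.val hmem)
    · intro htop
      have hmem : (⟨h₀, hHK hh₀H⟩ : ↥(H ⊔ M)) ∈ M.subgroupOf (H ⊔ M) := by
        rw [htop]
        exact Subgroup.mem_top _
      rw [Subgroup.mem_subgroupOf] at hmem
      exact hh₀N (hMN hmem)
    · intro x hx
      rw [Subgroup.mem_subgroupOf] at hx ⊢
      exact (le_sup_right : M ≤ (H ⊓ N) ⊔ M) hx
    · intro x hxM hx1 g hg
      rw [Subgroup.mem_subgroupOf] at hxM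
      rw [Subgroup.mem_subgroupOf, hN'mem (↑g) g.2]
      have hcomm : (↑x : G) * ↑g = ↑g * ↑x :=
        congrArg Subtype.val (Subgroup.mem_centralizer_iff.mp hg x rfl)
      obtain ⟨h, hh, m, hm, hgeq⟩ := (hmemK ↑g).mp g.2
      by_cases hhN : h ∈ N
      · rw [← hgeq]
        exact mul_mem hhN (hMN hm)
      · exfalso
        have hx1' : (↑x : G) ≠ 1 := fun hc => hx1 (Subtype.ext hc)
        have hxg : (↑x : G) * (h * m) = (h * m) * ↑x := by rw [hgeq]; exact hcomm
        have hrel : h⁻¹ * ↑x * h = m * ↑x * m⁻¹ := by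
          calc h⁻¹ * (↑x : G) * h = h⁻¹ * (↑x * (h * m)) * m⁻¹ := by group
            _ = h⁻¹ * ((h * m) * ↑x) * m⁻¹ := by rw [hxg]
            _ = m * ↑x * m⁻¹ := by group
        have hconjM : ∀ a : G, a ∈ M → h⁻¹ * a * h ∈ M := fun a ha => by
          simpa using hM.conj_mem a ha h⁻¹
        let φ : ↥M → ↥M := fun a =>
          ⟨(↑a : G)⁻¹ * (h⁻¹ * ↑a * h), mul_mem (inv_mem a.2) (hconjM ↑a a.2)⟩
        have hinj : Function.Injective φ := by
          intro a b hab
          have e : (↑a : G)⁻¹ * (h⁻¹ * ↑a * h) = (↑b : G)⁻¹ * (h⁻¹ * ↑b * h) :=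
            congrArg Subtype.val hab
          have h3 : h⁻¹ * (↑b : G) * h = ↑b * ((↑a : G)⁻¹ * (h⁻¹ * ↑a * h)) := by
            rw [e]; group
          have e2 : (↑b : G) * (↑a)⁻¹ * h = h * (↑b * (↑a)⁻¹) := by
            have hmain : h⁻¹ * ((↑b : G) * (↑a)⁻¹ * h) = ↑b * (↑a)⁻¹ := by
              calc h⁻¹ * ((↑b : G) * (↑a)⁻¹ * h)
                  = (h⁻¹ * ↑b * h) * (h⁻¹ * (↑a)⁻¹ * h) := by group
                _ = (↑b * ((↑a : G)⁻¹ * (h⁻¹ * ↑a * h))) * (h⁻¹ * (↑a)⁻¹ * h) := by rw [h3]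
                _ = ↑b * (↑a)⁻¹ := by group
            calc (↑b : G) * (↑a)⁻¹ * h = h * (h⁻¹ * (↑b * (↑a)⁻¹ * h)) := by group
              _ = h * (↑b * (↑a)⁻¹) := by rw [hmain]
          have hba := hfpf h hh hhN (↑b * (↑a)⁻¹) (mul_mem b.2 (inv_mem a.2)) e2
          exact (Subtype.ext (mul_inv_eq_one.mp hba)).symm
        obtain ⟨c, hc⟩ := Finite.injective_iff_surjective.mp hinj ⟨m⁻¹, inv_mem hm⟩
        have hcval : (↑c : G)⁻¹ * (h⁻¹ * ↑c * h) = m⁻¹ := congrArg Subtype.val hc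
        have hch : h⁻¹ * (↑c : G) * h = ↑c * m⁻¹ := by
          rw [← hcval]; group
        have h5 : h⁻¹ * ((↑c : G) * ↑x * (↑c)⁻¹) * h
            = (h⁻¹ * ↑c * h) * (h⁻¹ * ↑x * h) * (h⁻¹ * ↑c * h)⁻¹ := by group
        rw [hch, hrel] at h5
        have h6 : ((↑c : G) * m⁻¹) * (m * ↑x * m⁻¹) * (↑c * m⁻¹)⁻¹ = ↑c * ↑x * (↑c)⁻¹ := by
          group
        rw [h6] at h5
        have hkey : ((↑c : G) * ↑x * (↑c)⁻¹) * h = h * (↑c * ↑x * (↑c)⁻¹) := by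
          calc ((↑c : G) * ↑x * (↑c)⁻¹) * h
              = h * (h⁻¹ * (↑c * ↑x * (↑c)⁻¹) * h) := by group
            _ = h * (↑c * ↑x * (↑c)⁻¹) := by rw [h5]
        have hy1 := hfpf h hh hhN (↑c * ↑x * (↑c)⁻¹)
          (mul_mem (mul_mem c.2 hxM) (inv_mem c.2)) hkey
        apply hx1'
        have hxe : (↑x : G) = (↑c)⁻¹ * (↑c * ↑x * (↑c)⁻¹) * ↑c := by group
        rw [hxe, hy1]
        group
end

section
/- Let M and N be nontrivial proper normal subgroups of a finite group G with M ≤ N, and let H ≤ G be a subgroup satisfying G = HM and H ∩ M = 1. Then (G,N,M) is a Frobenius triple if and only if (G, H, H ∩ N) is a Frobenius–Wielandt triple, i.e., H ∩ N is a proper normal subgroup of H and H^g ∩ H ≤ H ∩ N for every g ∈ G \ H. -/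
theorem frobenius_triple_iff_frobenius_wielandt {G : Type*} [Group G] [Fintype G]
    (N M : Subgroup G) (hM : M.Normal) (hN : N.Normal)
    (hMbot : M ≠ ⊥) (hMtop : M ≠ ⊤) (hNbot : N ≠ ⊥) (hNtop : N ≠ ⊤) (hMN : M ≤ N)
    (H : Subgroup G) (hHM : ∀ g : G, ∃ h ∈ H, ∃ m ∈ M, g = h * m) (hHMcap : H ⊓ M = ⊥) :
    IsFrobeniusTriple N M ↔
      (H ⊓ N < H ∧ ((H ⊓ N).subgroupOf H).Normal ∧
        ∀ g : G, g ∉ H → ∀ x ∈ H, g * x * g⁻¹ ∈ H → x ∈ N) := by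
  have hHnotleN : ¬ H ≤ N := by
    intro hle
    apply hNtop
    rw [eq_top_iff]
    intro g _
    obtain ⟨h, hh, m, hm, rfl⟩ := hHM g
    exact N.mul_mem (hle hh) (hMN hm)
  constructor
  · rintro ⟨-, -, -, -, -, -, -, hcent⟩
    refine ⟨lt_of_le_of_ne inf_le_left fun hEq => hHnotleN (inf_eq_left.mp hEq), ?_, ?_⟩
    · constructor
      intro n hn g
      rw [Subgroup.mem_subgroupOf] at hn ⊢
      refine ⟨(g * n * g⁻¹).2, ?_⟩
      simp only [Subgroup.coe_mul, Subgroup.coe_inv]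
      exact hN.conj_mem _ hn.2 _
    · intro g hg x hxH hgx
      obtain ⟨h', hh', m, hm, rfl⟩ := hHM g
      have hm1 : m ≠ 1 := by rintro rfl; exact hg (by simpa using hh')
      have hmem : m * x * m⁻¹ ∈ H := by
        have h1 : h'⁻¹ * (h' * m * x * (h' * m)⁻¹) * h' = m * x * m⁻¹ := by group
        rw [← h1]
        exact H.mul_mem (H.mul_mem (H.inv_mem hh') hgx) hh'
      have ht : m * x * m⁻¹ * x⁻¹ ∈ H ⊓ M := by
        refine ⟨H.mul_mem hmem (H.inv_mem hxH), ?_⟩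
        have h2 : m * x * m⁻¹ * x⁻¹ = m * (x * m⁻¹ * x⁻¹) := by group
        rw [h2]
        exact M.mul_mem hm (hM.conj_mem _ (M.inv_mem hm) _)
      rw [hHMcap, Subgroup.mem_bot] at ht
      have hcomm : m * x = x * m := by
        have h2 : m * x = (m * x * m⁻¹ * x⁻¹) * (x * m) := by group
        rw [h2, ht, one_mul]
      refine hcent m hm hm1 ?_
      rw [Subgroup.mem_centralizer_iff]
      intro y hy
      rw [Set.mem_singleton_iff] at hy
      subst hy
      exact hcomm
  · rintro ⟨-, -, hFW⟩
    refine ⟨hN, hM, hNbot, hNtop, hMbot, hMtop, hMN, ?_⟩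
    intro x hxM hx1 c hcc
    rw [Subgroup.mem_centralizer_iff] at hcc
    have hxc : x * c = c * x := hcc x rfl
    obtain ⟨h, hhH, m', hm'M, rfl⟩ := hHM c
    have key : ∃ m ∈ M, m ≠ 1 ∧ h * m = m * h := by
      by_contra hcon
      push_neg at hcon
      set f : M → M := fun u => ⟨h⁻¹ * (u : G)⁻¹ * h * u,
        M.mul_mem (by simpa using hM.conj_mem _ (M.inv_mem u.2) h⁻¹) u.2⟩ with hf
      have hinj : Function.Injective f := by
        rintro ⟨a, ha⟩ ⟨b, hb⟩ huv
        have h1 : h⁻¹ * a⁻¹ * h * a = h⁻¹ * b⁻¹ * h * b :=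
          congrArg Subtype.val huv
        have e : a⁻¹ * (h * a) = b⁻¹ * (h * b) := by
          have := congrArg (fun z => h * z) h1
          simpa [mul_assoc] using this
        have h2 : h * (b * a⁻¹) = (b * a⁻¹) * h := by
          calc h * (b * a⁻¹)
              = b * (b⁻¹ * (h * b)) * a⁻¹ := by group
            _ = b * (a⁻¹ * (h * a)) * a⁻¹ := by rw [e]
            _ = (b * a⁻¹) * h := by group
        by_cases hvu : b * a⁻¹ = 1
        · exact (Subtype.ext (mul_inv_eq_one.mp hvu)).symm
        · exact absurd h2 (hcon _ (M.mul_mem hb (M.inv_mem ha)) hvu)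
      obtain ⟨u, hu⟩ := Finite.injective_iff_surjective.mp hinj ⟨m', hm'M⟩
      have hu' : h⁻¹ * (u : G)⁻¹ * h * u = m' := congrArg Subtype.val hu
      have hwM : (u : G) * x * (u : G)⁻¹ ∈ M :=
        M.mul_mem (M.mul_mem u.2 hxM) (M.inv_mem u.2)
      have hw1 : (u : G) * x * (u : G)⁻¹ ≠ 1 := by
        intro he
        apply hx1
        have := congrArg (fun z => (u : G)⁻¹ * z * u) he
        simpa [mul_assoc] using this
      have h3 : h * m' = (u : G)⁻¹ * h * u := by rw [← hu']; group
      have hcw : h * ((u : G) * x * (u : G)⁻¹) = ((u : G) * x * (u : G)⁻¹) * h := by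
        calc h * ((u : G) * x * (u : G)⁻¹)
            = (u : G) * ((u : G)⁻¹ * h * u) * x * (u : G)⁻¹ := by group
          _ = (u : G) * (h * m') * x * (u : G)⁻¹ := by rw [h3]
          _ = (u : G) * (h * m' * x) * (u : G)⁻¹ := by group
          _ = (u : G) * (x * (h * m')) * (u : G)⁻¹ := by rw [← hxc]
          _ = (u : G) * (x * ((u : G)⁻¹ * h * u)) * (u : G)⁻¹ := by rw [h3]
          _ = ((u : G) * x * (u : G)⁻¹) * h := by group
      exact hcon _ hwM hw1 hcw
    obtain ⟨m, hmM, hm1, hcomm⟩ := key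
    have hmH : m ∉ H := fun hmem => hm1 (by
      have hb : m ∈ H ⊓ M := ⟨hmem, hmM⟩
      rwa [hHMcap, Subgroup.mem_bot] at hb)
    have hhN : h ∈ N := by
      refine hFW m hmH h hhH ?_
      have h4 : m * h * m⁻¹ = h := by rw [← hcomm, mul_inv_cancel_right]
      rw [h4]; exact hhH
    exact N.mul_mem hhN (hMN hm'M)
end

section
/- Let M and N be nontrivial proper normal subgroups of a finite group G with M ≤ N, and assume M has a complement H in G (i.e., G = HM and H ∩ M = 1). Then C_G(x) ≤ N for every nonidentity x ∈ M if and only if C_G(h) ≤ H for every h ∈ H \ N. -/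
theorem centralizer_cond_iff_centralizer_in_H {G : Type*} [Group G] [Fintype G]
    (M N : Subgroup G) (hM : M.Normal) (hN : N.Normal)
    (hMbot : M ≠ ⊥) (hMtop : M ≠ ⊤) (hNbot : N ≠ ⊥) (hNtop : N ≠ ⊤) (hMN : M ≤ N)
    (H : Subgroup G) (hHM : ∀ g : G, ∃ h ∈ H, ∃ m ∈ M, g = h * m) (hHMcap : H ⊓ M = ⊥) :
    (∀ x ∈ M, x ≠ 1 → Subgroup.centralizer {x} ≤ N) ↔
      (∀ h ∈ H, h ∉ N → Subgroup.centralizer {h} ≤ H) := by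
  constructor
  · intro hyp h hh hhN g hg
    rw [Subgroup.mem_centralizer_iff] at hg
    have hg' : h * g = g * h := hg h rfl
    obtain ⟨h₁, hh₁, m, hm, rfl⟩ := hHM g
    have key : h₁⁻¹ * h * h₁ = m * h * m⁻¹ := by
      calc h₁⁻¹ * h * h₁ = h₁⁻¹ * (h * (h₁ * m) * m⁻¹) := by group
        _ = h₁⁻¹ * ((h₁ * m) * h * m⁻¹) := by rw [hg']
        _ = m * h * m⁻¹ := by group
    have hcH : m * h * m⁻¹ * h⁻¹ ∈ H := by
      rw [show m * h * m⁻¹ * h⁻¹ = (h₁⁻¹ * h * h₁) * h⁻¹ by rw [key]]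
      exact mul_mem (mul_mem (mul_mem (inv_mem hh₁) hh) hh₁) (inv_mem hh)
    have hcM : m * h * m⁻¹ * h⁻¹ ∈ M := by
      rw [show m * h * m⁻¹ * h⁻¹ = m * (h * m⁻¹ * h⁻¹) by group]
      exact mul_mem hm (hM.conj_mem _ (inv_mem hm) h)
    have hc1 : m * h * m⁻¹ * h⁻¹ = 1 := by
      have : m * h * m⁻¹ * h⁻¹ ∈ H ⊓ M := ⟨hcH, hcM⟩
      rw [hHMcap] at this
      exact Subgroup.mem_bot.mp this
    have hcomm : m * h = h * m := by
      calc m * h = (m * h * m⁻¹ * h⁻¹) * (h * m) := by group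
        _ = h * m := by rw [hc1, one_mul]
    by_cases hm1 : m = 1
    · subst hm1; simpa using hh₁
    · exfalso
      apply hhN
      exact hyp m hm hm1 (Subgroup.mem_centralizer_iff.mpr (by rintro s rfl; exact hcomm))
  · intro hyp x hxM hx1 g hg
    rw [Subgroup.mem_centralizer_iff] at hg
    have hg' : x * g = g * x := hg x rfl
    obtain ⟨h, hh, m, hm, rfl⟩ := hHM g
    by_cases hhN : h ∈ N
    · exact mul_mem hhN (hMN hm)
    · exfalso
      have hC := hyp h hh hhN
      have hCM : ∀ z ∈ M, h * z = z * h → z = 1 := by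
        intro z hz hcomm
        have hzH : z ∈ H := hC (Subgroup.mem_centralizer_iff.mpr (by rintro s rfl; exact hcomm))
        have : z ∈ H ⊓ M := ⟨hzH, hz⟩
        rw [hHMcap] at this
        exact Subgroup.mem_bot.mp this
      set f : M → M := fun a => ⟨a * (h * a⁻¹ * h⁻¹),
        mul_mem a.2 (hM.conj_mem _ (inv_mem a.2) h)⟩ with hf
      have hinj : Function.Injective f := by
        rintro ⟨a, haM⟩ ⟨b, hbM⟩ hab
        have hab' : a * (h * a⁻¹ * h⁻¹) = b * (h * b⁻¹ * h⁻¹) :=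
          congrArg Subtype.val hab
        have : h * (b⁻¹ * a) = (b⁻¹ * a) * h := by
          have h2 : a * (h * a⁻¹) = b * (h * b⁻¹) := by
            calc a * (h * a⁻¹) = (a * (h * a⁻¹ * h⁻¹)) * h := by group
              _ = (b * (h * b⁻¹ * h⁻¹)) * h := by rw [hab']
              _ = b * (h * b⁻¹) := by group
          calc h * (b⁻¹ * a) = b⁻¹ * (b * (h * b⁻¹)) * a := by group
            _ = b⁻¹ * (a * (h * a⁻¹)) * a := by rw [h2]
            _ = (b⁻¹ * a) * h := by group
        have hz1 : b⁻¹ * a = 1 := hCM _ (mul_mem (inv_mem hbM) haM) this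
        exact Subtype.ext (inv_mul_eq_one.mp hz1).symm
      have hsurj : Function.Surjective f := Finite.surjective_of_injective hinj
      obtain ⟨⟨a, haM⟩, ha⟩ := hsurj ⟨h * m * h⁻¹, hM.conj_mem _ hm h⟩
      have ha' : a * (h * a⁻¹ * h⁻¹) = h * m * h⁻¹ := congrArg Subtype.val ha
      have hconj : a * h * a⁻¹ = h * m := by
        calc a * h * a⁻¹ = (a * (h * a⁻¹ * h⁻¹)) * h := by group
          _ = (h * m * h⁻¹) * h := by rw [ha']
          _ = h * m := by group
      have hcomm : h * (a⁻¹ * x * a) = (a⁻¹ * x * a) * h := by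
        calc h * (a⁻¹ * x * a)
            = a⁻¹ * ((a * h * a⁻¹) * x) * a := by group
          _ = a⁻¹ * ((h * m) * x) * a := by rw [hconj]
          _ = a⁻¹ * (x * (h * m)) * a := by rw [← hg']
          _ = a⁻¹ * (x * (a * h * a⁻¹)) * a := by rw [hconj]
          _ = (a⁻¹ * x * a) * h := by group
      have hz : a⁻¹ * x * a ∈ M := by
        rw [show a⁻¹ * x * a = a⁻¹ * x * (a⁻¹)⁻¹ by group]
        exact hM.conj_mem _ hxM _
      have h1 : a⁻¹ * x * a = 1 := hCM _ hz hcomm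
      apply hx1
      calc x = a * (a⁻¹ * x * a) * a⁻¹ := by group
        _ = 1 := by rw [h1]; group
end

section
/- Let M and N be nontrivial proper normal subgroups of a finite group G with M ≤ N, and assume M has a complement H in G (i.e., G = HM and H ∩ M = 1). Then C_G(x) ≤ N for every nonidentity x ∈ M if and only if every element g ∈ G \ N is conjugate in G to some element of H. -/
/-!
Both directions go through the condition `C_M(h) = 1` for `h ∈ H ∖ N`. The map
`n ↦ h⁻¹ (n h n⁻¹)` of the finite group `M` to itself is injective exactly when `C_M(h) = 1` and
surjective exactly when the coset `hM` is the `M`-conjugacy class of `h`. Every element outside `N`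
lies in such a coset, and because `H` complements `M`, an element of `hM` that is conjugate into
`H` is already `M`-conjugate to `h`.
-/

namespace Subgroup

variable {G : Type*} [Group G] {M : Subgroup G}

theorem inf_centralizer_eq_bot_iff_forall_exists_conj [Finite M] (hM : M.Normal) (g : G) :
    M ⊓ centralizer {g} = ⊥ ↔ ∀ m ∈ M, ∃ n ∈ M, n * g * n⁻¹ = g * m := by
  let f : M → M := fun n => ⟨g⁻¹ * (n * g * (n : G)⁻¹),
    by simpa [mul_assoc] using M.mul_mem (hM.conj_mem _ n.2 g⁻¹) (M.inv_mem n.2)⟩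
  have hf : ∀ a b : M, f a = f b ↔ (b : G)⁻¹ * a ∈ centralizer {g} := by
    intro a b
    rw [Subtype.ext_iff, mem_centralizer_singleton_iff]
    simp only [f, mul_right_inj]
    constructor <;> intro h
    · calc (b : G)⁻¹ * a * g = (b : G)⁻¹ * (a * g * (a : G)⁻¹) * a := by group
        _ = g * ((b : G)⁻¹ * a) := by rw [h]; group
    · calc (a : G) * g * (a : G)⁻¹ = b * ((b : G)⁻¹ * a * g) * (a : G)⁻¹ := by group
        _ = b * g * (b : G)⁻¹ := by rw [h]; group
  have hinj : Function.Injective f ↔ M ⊓ centralizer {g} = ⊥ := by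
    rw [eq_bot_iff]
    constructor
    · rintro hinj x ⟨hxM, hxC⟩
      have := hinj ((hf ⟨x, hxM⟩ 1).2 (by simpa using hxC))
      simpa [Subtype.ext_iff] using this
    · intro hbot a b hab
      have hba : (b : G)⁻¹ * a ∈ M ⊓ centralizer {g} :=
        ⟨M.mul_mem (M.inv_mem b.2) a.2, (hf a b).1 hab⟩
      exact Subtype.ext (inv_mul_eq_one.1 (mem_bot.1 (hbot hba))).symm
  have hsurj : Function.Surjective f ↔ ∀ m ∈ M, ∃ n ∈ M, n * g * n⁻¹ = g * m := by
    refine ⟨fun hsurj m hm => ?_, fun h m => ?_⟩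
    · obtain ⟨n, hn⟩ := hsurj ⟨m, hm⟩
      refine ⟨n, n.2, ?_⟩
      rw [← show g⁻¹ * (n * g * (n : G)⁻¹) = m from congrArg Subtype.val hn]
      group
    · obtain ⟨n, hnM, hn⟩ := h m m.2
      exact ⟨⟨n, hnM⟩, Subtype.ext (by simp [f, hn])⟩
  rw [← hinj, ← hsurj]
  exact Finite.injective_iff_surjective

theorem exists_conj_eq_mul_of_isConj_mem {H : Subgroup G} (hM : M.Normal)
    (hHM : ∀ g : G, ∃ h ∈ H, ∃ m ∈ M, g = h * m) (hHMcap : H ⊓ M = ⊥)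
    {h k m : G} (hh : h ∈ H) (hk : k ∈ H) (hm : m ∈ M) (hconj : IsConj (h * m) k) :
    ∃ n ∈ M, n * h * n⁻¹ = h * m := by
  obtain ⟨c, hc⟩ := isConj_iff.1 hconj.symm
  obtain ⟨k₁, hk₁, m₁, hm₁, rfl⟩ := hHM c
  obtain ⟨n, hn, k', hk', hnk'⟩ : ∃ n ∈ M, ∃ k' ∈ H, n * k' * n⁻¹ = h * m :=
    ⟨k₁ * m₁ * k₁⁻¹, hM.conj_mem m₁ hm₁ k₁, k₁ * k * k₁⁻¹,
      H.mul_mem (H.mul_mem hk₁ hk) (H.inv_mem hk₁), by rw [← hc]; group⟩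
  -- `k'` and `h` lie in `H` and agree modulo `M`, so they are equal.
  have hmod : h⁻¹ * k' ∈ M := by
    rw [show h⁻¹ * k' = m * (n * (k'⁻¹ * n⁻¹ * k'⁻¹⁻¹)) by
      rw [show h = n * k' * n⁻¹ * m⁻¹ by rw [hnk']; group]; group]
    exact M.mul_mem hm (M.mul_mem hn (hM.conj_mem _ (M.inv_mem hn) _))
  have hk'h : h⁻¹ * k' ∈ H ⊓ M := ⟨H.mul_mem (H.inv_mem hh) hk', hmod⟩
  rw [hHMcap, mem_bot, inv_mul_eq_one] at hk'h
  exact ⟨n, hn, hk'h ▸ hnk'⟩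

end Subgroup

open Subgroup

theorem centralizer_cond_iff_conjugate_into_H_general {G : Type*} [Group G] [Fintype G]
    (M N : Subgroup G) (hM : M.Normal) (hN : N.Normal) (hMN : M ≤ N)
    (H : Subgroup G) (hHM : ∀ g : G, ∃ h ∈ H, ∃ m ∈ M, g = h * m) (hHMcap : H ⊓ M = ⊥) :
    (∀ x ∈ M, x ≠ 1 → Subgroup.centralizer {x} ≤ N) ↔
      (∀ g : G, g ∉ N → ∃ h ∈ H, IsConj g h) := by
  have mul_mem_iff {g m : G} (hm : m ∈ M) : g * m ∈ N ↔ g ∈ N := N.mul_mem_cancel_right (hMN hm)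
  constructor
  · intro hcent g hg
    obtain ⟨h, hh, m, hm, rfl⟩ := hHM g
    have hbot : M ⊓ centralizer {h} = ⊥ := eq_bot_iff.2 fun x ⟨hxM, hxC⟩ => mem_bot.2 <|
      by_contra fun hx => hg <| (mul_mem_iff hm).2 <| hcent x hxM hx <|
        mem_centralizer_singleton_iff.2 (mem_centralizer_singleton_iff.1 hxC).symm
    obtain ⟨n, -, hn⟩ := (inf_centralizer_eq_bot_iff_forall_exists_conj hM h).1 hbot m hm
    exact ⟨h, hh, isConj_iff.2 ⟨n⁻¹, by rw [← hn]; group⟩⟩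
  · intro hconj x hxM hx g hgx
    by_contra hgN
    obtain ⟨h, hh, hgh⟩ := hconj g hgN
    obtain ⟨c, hc⟩ := isConj_iff.1 hgh
    have hhN : h ∉ N := fun hhN => hgN (by simpa [← hc, mul_assoc] using hN.conj_mem _ hhN c⁻¹)
    have hbot : M ⊓ centralizer {h} = ⊥ :=
      (inf_centralizer_eq_bot_iff_forall_exists_conj hM h).2 fun m hm =>
        let ⟨k, hk, hconj'⟩ := hconj (h * m) (by rwa [mul_mem_iff hm])
        exists_conj_eq_mul_of_isConj_mem hM hHM hHMcap hh hk hm hconj'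
    have hcx : c * x * c⁻¹ ∈ M ⊓ centralizer {h} := by
      refine ⟨hM.conj_mem x hxM c, mem_centralizer_singleton_iff.2 ?_⟩
      rw [← hc]
      simpa using (mem_centralizer_singleton_iff.1 hgx).symm
    exact hx (by simpa using mem_bot.1 (hbot.le hcx))

theorem centralizer_cond_iff_conjugate_into_H {G : Type*} [Group G] [Fintype G]
    (M N : Subgroup G) (hM : M.Normal) (hN : N.Normal)
    (hMbot : M ≠ ⊥) (hMtop : M ≠ ⊤) (hNbot : N ≠ ⊥) (hNtop : N ≠ ⊤) (hMN : M ≤ N)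
    (H : Subgroup G) (hHM : ∀ g : G, ∃ h ∈ H, ∃ m ∈ M, g = h * m) (hHMcap : H ⊓ M = ⊥) :
    (∀ x ∈ M, x ≠ 1 → Subgroup.centralizer {x} ≤ N) ↔
      (∀ g : G, g ∉ N → ∃ h ∈ H, IsConj g h) :=
  centralizer_cond_iff_conjugate_into_H_general M N hM hN hMN H hHM hHMcap
end

section
/- Let M and N be nontrivial proper normal subgroups of a finite group G with M ≤ N, and assume M has a complement H in G (i.e., G = HM and H ∩ M = 1). Then C_G(x) ≤ N for every nonidentity x ∈ M if and only if every h ∈ H \ N is conjugate in G to hm for every m ∈ M. -/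
/-- Key counting lemma: if `h ∈ H` is conjugate to every element of `h*M`, where `H` is a
complement to the normal subgroup `M`, then no nontrivial element of `M` commutes with `h`. -/
lemma key_aux {G : Type*} [Group G] [Fintype G] (M : Subgroup G) (hM : M.Normal)
    (H : Subgroup G) (hHM : ∀ g : G, ∃ h ∈ H, ∃ m ∈ M, g = h * m) (hHMcap : H ⊓ M = ⊥)
    (h : G) (hH : h ∈ H) (hc : ∀ m ∈ M, IsConj h (h * m))
    (z : G) (hzM : z ∈ M) (hcomm : z * h = h * z) : z = 1 := by
  classical
  set C : Subgroup G := Subgroup.centralizer {h} with hCdef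
  set S : Set G := {c : G | c * h * c⁻¹ * h⁻¹ ∈ M} with hSdef
  have S_mem : ∀ c : G, c ∈ S ↔ c * h * c⁻¹ * h⁻¹ ∈ M := fun c => Iff.rfl
  -- choice of conjugators
  have hcm : ∀ m : M, ∃ c : G, c * h * c⁻¹ = h * m := fun m => isConj_iff.mp (hc m m.2)
  choose cm hcmspec using hcm
  -- injection M × C → S
  have f2mem : ∀ (m : M) (u : C), cm m * (u : G) ∈ S := by
    intro m u
    have hu : (u : G) * h = h * u := Subgroup.mem_centralizer_singleton_iff.mp u.2
    have hval : (cm m * u) * h * (cm m * u)⁻¹ = h * m := by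
      have e : (cm m * u) * h * (cm m * u)⁻¹ = cm m * ((u : G) * h * (u : G)⁻¹) * (cm m)⁻¹ := by
        group
      have e2 : (u : G) * h * (u : G)⁻¹ = h := by rw [hu]; group
      rw [e, e2, hcmspec]
    rw [S_mem, hval]
    have : h * (m : G) * h⁻¹ * h⁻¹ * h = h * m * h⁻¹ := by group
    simpa [mul_assoc] using hM.conj_mem _ m.2 h
  have f2inj : Function.Injective (fun p : M × C => (⟨cm p.1 * p.2, f2mem p.1 p.2⟩ : S)) := by
    rintro ⟨m, u⟩ ⟨m', u'⟩ hpq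
    have hval : cm m * (u : G) = cm m' * (u' : G) := congrArg Subtype.val hpq
    have conj : ∀ (m₀ : M) (u₀ : C), (cm m₀ * (u₀ : G)) * h * (cm m₀ * (u₀ : G))⁻¹ = h * m₀ := by
      intro m₀ u₀
      have hu : (u₀ : G) * h = h * u₀ := Subgroup.mem_centralizer_singleton_iff.mp u₀.2
      have e : (cm m₀ * u₀) * h * (cm m₀ * u₀)⁻¹
          = cm m₀ * ((u₀ : G) * h * (u₀ : G)⁻¹) * (cm m₀)⁻¹ := by group
      have e2 : (u₀ : G) * h * (u₀ : G)⁻¹ = h := by rw [hu]; group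
      rw [e, e2, hcmspec]
    have h1 := conj m u
    have h2 := conj m' u'
    rw [hval] at h1
    have hmm : (m : G) = m' := mul_left_cancel (h1.symm.trans h2)
    have hmm' : m = m' := Subtype.ext hmm
    subst hmm'
    have : (u : G) = u' := mul_left_cancel hval
    exact Prod.ext rfl (Subtype.ext this)
  -- surjection (H ⊓ C) × M → S
  have f1mem : ∀ (a : (H ⊓ C : Subgroup G)) (m : M), (a : G) * m ∈ S := by
    intro a m
    have ha : (a : G) * h = h * a := Subgroup.mem_centralizer_singleton_iff.mp a.2.2
    have key : (a : G) * m * h * ((a : G) * m)⁻¹ * h⁻¹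
        = ((a : G) * ((m : G) * h * (m : G)⁻¹ * h⁻¹) * (a : G)⁻¹)
          * ((a : G) * h * (a : G)⁻¹ * h⁻¹) := by group
    rw [S_mem, key]
    have h2 : (a : G) * h * (a : G)⁻¹ * h⁻¹ = 1 := by rw [ha]; group
    rw [h2, mul_one]
    have hmS : (m : G) * h * (m : G)⁻¹ * h⁻¹ ∈ M := by
      have e : (m : G) * h * (m : G)⁻¹ * h⁻¹ = (m : G) * (h * (m : G)⁻¹ * h⁻¹) := by group
      rw [e]
      exact M.mul_mem m.2 (by simpa [mul_assoc] using hM.conj_mem _ (M.inv_mem m.2) h)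
    exact hM.conj_mem _ hmS a
  have f1surj : Function.Surjective
      (fun p : (H ⊓ C : Subgroup G) × M => (⟨(p.1 : G) * p.2, f1mem p.1 p.2⟩ : S)) := by
    rintro ⟨c, hcS⟩
    rw [S_mem] at hcS
    obtain ⟨a, haH, m, hmM, hdec⟩ := hHM c
    -- a = c * m⁻¹ ∈ S since S is closed under the relevant products
    have haS : a * h * a⁻¹ * h⁻¹ ∈ M := by
      have ha_eq : a = c * m⁻¹ := by rw [hdec]; group
      have key : a * h * a⁻¹ * h⁻¹
          = (c * (m⁻¹ * h * m * h⁻¹) * c⁻¹) * (c * h * c⁻¹ * h⁻¹) := by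
        rw [ha_eq]; group
      rw [key]
      refine M.mul_mem (hM.conj_mem _ ?_ c) hcS
      have e : m⁻¹ * h * m * h⁻¹ = m⁻¹ * (h * m * h⁻¹) := by group
      rw [e]
      exact M.mul_mem (M.inv_mem hmM) (by simpa [mul_assoc] using hM.conj_mem _ hmM h)
    -- but a*h*a⁻¹*h⁻¹ ∈ H as well, hence trivial
    have haH' : a * h * a⁻¹ * h⁻¹ ∈ H :=
      H.mul_mem (H.mul_mem (H.mul_mem haH hH) (H.inv_mem haH)) (H.inv_mem hH)
    have htriv : a * h * a⁻¹ * h⁻¹ = 1 := by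
      have : a * h * a⁻¹ * h⁻¹ ∈ H ⊓ M := ⟨haH', haS⟩
      rw [hHMcap] at this
      exact this
    have haC : a ∈ C := by
      rw [hCdef, Subgroup.mem_centralizer_singleton_iff]
      have : a * h * a⁻¹ = h := by
        have e : a * h * a⁻¹ = (a * h * a⁻¹ * h⁻¹) * h := by group
        rw [e, htriv, one_mul]
      calc a * h = (a * h * a⁻¹) * a := by group
        _ = h * a := by rw [this]
    exact ⟨⟨⟨a, ⟨haH, haC⟩⟩, ⟨m, hmM⟩⟩, Subtype.ext hdec.symm⟩
  -- cardinality comparison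
  have card_le : Nat.card (M × C) ≤ Nat.card ((H ⊓ C : Subgroup G) × M) :=
    le_trans (Nat.card_le_card_of_injective _ f2inj)
      (Nat.card_le_card_of_surjective _ f1surj)
  rw [Nat.card_prod, Nat.card_prod] at card_le
  have hMpos : 0 < Nat.card M := Nat.card_pos
  have card_le' : Nat.card C ≤ Nat.card (H ⊓ C : Subgroup G) := by
    have := card_le
    rw [mul_comm (Nat.card (H ⊓ C : Subgroup G)) (Nat.card M)] at this
    exact Nat.le_of_mul_le_mul_left this hMpos
  have heq : H ⊓ C = C := Subgroup.eq_of_le_of_card_ge inf_le_right card_le'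
  -- conclude
  have hzC : z ∈ C := Subgroup.mem_centralizer_singleton_iff.mpr hcomm
  rw [← heq] at hzC
  have : z ∈ H ⊓ M := ⟨hzC.1, hzM⟩
  rw [hHMcap] at this
  exact this

theorem centralizer_cond_iff_conj_coset {G : Type*} [Group G] [Fintype G]
    (M N : Subgroup G) (hM : M.Normal) (hN : N.Normal)
    (hMbot : M ≠ ⊥) (hMtop : M ≠ ⊤) (hNbot : N ≠ ⊥) (hNtop : N ≠ ⊤) (hMN : M ≤ N)
    (H : Subgroup G) (hHM : ∀ g : G, ∃ h ∈ H, ∃ m ∈ M, g = h * m) (hHMcap : H ⊓ M = ⊥) :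
    (∀ x ∈ M, x ≠ 1 → Subgroup.centralizer {x} ≤ N) ↔
      (∀ h ∈ H, h ∉ N → ∀ m ∈ M, IsConj h (h * m)) := by
  classical
  constructor
  · -- forward direction
    intro hcent h hH hhN m hm
    have hf : ∀ x : M, h⁻¹ * (x : G)⁻¹ * h * x ∈ M := by
      intro x
      have h1 : h⁻¹ * (x : G)⁻¹ * h ∈ M := by
        simpa [mul_assoc] using hM.conj_mem _ (M.inv_mem x.2) h⁻¹
      simpa [mul_assoc] using M.mul_mem h1 x.2
    set f : M → M := fun x => ⟨h⁻¹ * (x : G)⁻¹ * h * x, hf x⟩ with hfdef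
    have hinj : Function.Injective f := by
      intro x y hxy
      have hxy' : h⁻¹ * (x : G)⁻¹ * h * x = h⁻¹ * (y : G)⁻¹ * h * y :=
        congrArg Subtype.val hxy
      have h2 : (x : G)⁻¹ * h * x = (y : G)⁻¹ * h * y := by
        have := hxy'
        rw [mul_assoc, mul_assoc, mul_assoc, mul_assoc] at this
        have := mul_left_cancel this
        rw [← mul_assoc, ← mul_assoc] at this
        exact this
      have hz : ((x : G) * (y : G)⁻¹) * h = h * ((x : G) * (y : G)⁻¹) := by
        calc ((x : G) * (y : G)⁻¹) * h
            = (x : G) * ((y : G)⁻¹ * h * y) * (y : G)⁻¹ := by group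
          _ = (x : G) * ((x : G)⁻¹ * h * x) * (y : G)⁻¹ := by rw [h2]
          _ = h * ((x : G) * (y : G)⁻¹) := by group
      by_cases hne : (x : G) * (y : G)⁻¹ = 1
      · exact Subtype.ext (mul_inv_eq_one.mp hne)
      · exfalso
        have hzM : (x : G) * (y : G)⁻¹ ∈ M := M.mul_mem x.2 (M.inv_mem y.2)
        have hle := hcent _ hzM hne
        have : h ∈ Subgroup.centralizer {(x : G) * (y : G)⁻¹} :=
          Subgroup.mem_centralizer_singleton_iff.mpr (by rw [hz])
        exact hhN (hle this)
    have hsurj : Function.Surjective f := Finite.surjective_of_injective hinj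
    obtain ⟨x, hx⟩ := hsurj ⟨m, hm⟩
    have hxval : h⁻¹ * (x : G)⁻¹ * h * x = m := congrArg Subtype.val hx
    rw [isConj_iff]
    refine ⟨(x : G)⁻¹, ?_⟩
    calc (x : G)⁻¹ * h * ((x : G)⁻¹)⁻¹
        = h * (h⁻¹ * (x : G)⁻¹ * h * x) := by group
      _ = h * m := by rw [hxval]
  · -- reverse direction
    intro hconj x hxM hx1 g hg
    by_contra hgN
    obtain ⟨h, hH, m, hmM, hgdec⟩ := hHM g
    have hhN : h ∉ N := by
      intro hn
      exact hgN (by rw [hgdec]; exact N.mul_mem hn (hMN hmM))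
    have hcj : IsConj h g := by rw [hgdec]; exact hconj h hH hhN m hmM
    obtain ⟨c, hc⟩ := isConj_iff.mp hcj
    have hxg : g * x = x * g := Subgroup.mem_centralizer_singleton_iff.mp hg
    have hzM : c⁻¹ * x * c ∈ M := by simpa using hM.conj_mem _ hxM c⁻¹
    have hcomm : (c⁻¹ * x * c) * h = h * (c⁻¹ * x * c) := by
      have hh : h = c⁻¹ * g * c := by rw [← hc]; group
      calc (c⁻¹ * x * c) * h = c⁻¹ * x * c * (c⁻¹ * g * c) := by rw [← hh]
        _ = c⁻¹ * (x * g) * c := by group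
        _ = c⁻¹ * (g * x) * c := by rw [hxg]
        _ = (c⁻¹ * g * c) * (c⁻¹ * x * c) := by group
        _ = h * (c⁻¹ * x * c) := by rw [← hh]
    have hz1 : c⁻¹ * x * c = 1 :=
      key_aux M hM H hHM hHMcap h hH (hconj h hH hhN) _ hzM hcomm
    have : x = 1 := by
      have : x = c * (c⁻¹ * x * c) * c⁻¹ := by group
      rw [hz1] at this
      simpa using this
    exact hx1 this
end

section
/- Let (G,H,L) be a Frobenius–Wielandt triple in a finite group G, and suppose M and N are normal subgroups of G such that G = HM, H ∩ M = 1, G = HN and H ∩ N = L. Then N = LM, and (G,N,M) is a Frobenius triple; in particular C_M(g) = 1 for every g ∈ G \ N. -/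
theorem frobenius_wielandt_with_normal_complement {G : Type*} [Group G] [Fintype G]
    (H L : Subgroup G) (hHbot : H ≠ ⊥) (hHtop : H ≠ ⊤) (hLH : L < H)
    (hLnorm : ∀ h ∈ H, ∀ x ∈ L, h * x * h⁻¹ ∈ L)
    (hFW : ∀ g : G, g ∉ H → ∀ x ∈ H, g * x * g⁻¹ ∈ H → x ∈ L)
    (M N : Subgroup G) (hM : M.Normal) (hN : N.Normal)
    (hGHM : ∀ g : G, ∃ h ∈ H, ∃ m ∈ M, g = h * m) (hHM : H ⊓ M = ⊥)
    (hGHN : ∀ g : G, ∃ h ∈ H, ∃ n ∈ N, g = h * n) (hHN : H ⊓ N = L) :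
    N = L ⊔ M ∧ IsFrobeniusTriple N M ∧
      ∀ g : G, g ∉ N → ∀ x ∈ M, g * x = x * g → x = 1 := by
  classical
  have hLN : L ≤ N := hHN ▸ inf_le_right
  have hLleH : L ≤ H := hLH.le
  -- choice functions for the factorization G = H N
  obtain ⟨hh, hhH, nn, nnN, hfac⟩ :
      ∃ hh : G → G, (∀ g, hh g ∈ H) ∧ ∃ nn : G → G, (∀ g, nn g ∈ N) ∧
        ∀ g, g = hh g * nn g := by
    choose hh hhH nn nnN hfac using hGHN
    exact ⟨hh, hhH, nn, nnN, hfac⟩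
  -- counting: |G| * |L| ≤ |H| * |N|
  have cardHN : Fintype.card G * Nat.card L ≤ Nat.card H * Nat.card N := by
    have hinj : Function.Injective (fun p : G × L =>
        ((⟨hh p.1 * (p.2 : G)⁻¹, mul_mem (hhH p.1) (inv_mem (hLleH p.2.2))⟩ : H),
         (⟨(p.2 : G) * nn p.1, mul_mem (hLN p.2.2) (nnN p.1)⟩ : N))) := by
      rintro ⟨g₁, x₁⟩ ⟨g₂, x₂⟩ hpq
      simp only [Prod.mk.injEq, Subtype.mk.injEq] at hpq
      obtain ⟨h1, h2⟩ := hpq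
      have hg : g₁ = g₂ := by
        have := congrArg₂ (· * ·) h1 h2
        simpa [mul_assoc, ← hfac g₁, ← hfac g₂] using this
      subst hg
      have hx : (x₁ : G) = x₂ := by
        have : ((x₁ : G)⁻¹ : G) = (x₂ : G)⁻¹ := mul_left_cancel h1
        simpa using congrArg Inv.inv this
      exact Prod.ext rfl (Subtype.ext hx)
    calc Fintype.card G * Nat.card L = Nat.card (G × L) := by
          simp [Nat.card_eq_fintype_card, Fintype.card_prod]
      _ ≤ Nat.card (H × N) := Nat.card_le_card_of_injective _ hinj
      _ = Nat.card H * Nat.card N := by simp [Nat.card_eq_fintype_card, Fintype.card_prod]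
  -- the set of conjugates of elements of H \ L
  set S : Finset G :=
    Finset.univ.filter (fun g => ∃ a y, y ∈ H ∧ y ∉ L ∧ g = a * y * a⁻¹) with hS
  have memS : ∀ g : G, g ∈ S ↔ ∃ a y, y ∈ H ∧ y ∉ L ∧ g = a * y * a⁻¹ := by
    intro g; simp [hS]
  haveI : Fintype (G ⧸ H) := Fintype.ofFinite _
  -- lower bound on the size of S
  have hScard : Fintype.card (G ⧸ H) *
      ((H : Set G).toFinset.card - (L : Set G).toFinset.card) ≤ S.card := by
    have hsub : (L : Set G).toFinset ⊆ (H : Set G).toFinset := by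
      intro x hx; simp only [Set.mem_toFinset] at *; exact hLleH hx
    set T : Finset ((G ⧸ H) × G) :=
      Finset.univ ×ˢ ((H : Set G).toFinset \ (L : Set G).toFinset) with hT
    have hTcard : T.card = Fintype.card (G ⧸ H) *
        ((H : Set G).toFinset.card - (L : Set G).toFinset.card) := by
      rw [hT, Finset.card_product, Finset.card_univ, Finset.card_sdiff_of_subset hsub]
    rw [← hTcard]
    apply Finset.card_le_card_of_injOn (fun p => p.1.out * p.2 * p.1.out⁻¹)
    · rintro ⟨c, y⟩ hp
      simp only [hT, Finset.mem_product, Finset.mem_sdiff, Set.mem_toFinset,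
        SetLike.mem_coe] at hp
      exact (memS _).2 ⟨c.out, y, hp.2.1, hp.2.2, rfl⟩
    · rintro ⟨c₁, y₁⟩ hp₁ ⟨c₂, y₂⟩ hp₂ heq
      simp only [hT, Finset.coe_product, Set.mem_prod, Finset.mem_coe,
        Finset.mem_sdiff, Set.mem_toFinset, SetLike.mem_coe] at hp₁ hp₂
      simp only at heq
      by_cases hc : c₁ = c₂
      · subst hc
        have : y₁ = y₂ := by
          have := mul_left_cancel (mul_right_cancel heq)
          exact this
        simp [this]
      · exfalso
        have hout : (↑(c₁.out) : G ⧸ H) = c₁ := Quotient.out_eq c₁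
        have hout2 : (↑(c₂.out) : G ⧸ H) = c₂ := Quotient.out_eq c₂
        have hne : (c₂.out)⁻¹ * c₁.out ∉ H := by
          intro hmem
          exact hc (by rw [← hout, ← hout2]; exact (QuotientGroup.eq.2 hmem).symm)
        have hconj : ((c₂.out)⁻¹ * c₁.out) * y₁ * ((c₂.out)⁻¹ * c₁.out)⁻¹ = y₂ := by
          have hmid : (c₂.out)⁻¹ * (c₁.out * y₁ * (c₁.out)⁻¹) * c₂.out
              = (c₂.out)⁻¹ * (c₂.out * y₂ * (c₂.out)⁻¹) * c₂.out := by rw [heq]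
          calc ((c₂.out)⁻¹ * c₁.out) * y₁ * ((c₂.out)⁻¹ * c₁.out)⁻¹
              = (c₂.out)⁻¹ * (c₁.out * y₁ * (c₁.out)⁻¹) * c₂.out := by group
            _ = (c₂.out)⁻¹ * (c₂.out * y₂ * (c₂.out)⁻¹) * c₂.out := hmid
            _ = y₂ := by group
        have := hFW _ hne y₁ hp₁.2.1 (hconj ▸ hp₂.2.1)
        exact hp₁.2.2 this
  -- S is disjoint from N
  have hSN : ∀ g ∈ S, g ∉ N := by
    intro g hg hgN
    obtain ⟨a, y, hyH, hyL, rfl⟩ := (memS g).1 hg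
    have : a⁻¹ * (a * y * a⁻¹) * a⁻¹⁻¹ ∈ N := hN.conj_mem _ hgN a⁻¹
    have hyN : y ∈ N := by simpa [mul_assoc] using this
    exact hyL (hHN ▸ (Subgroup.mem_inf.2 ⟨hyH, hyN⟩))
  -- key: every element outside N is conjugate to an element of H \ L
  have key : ∀ g : G, g ∉ N → ∃ a y, y ∈ H ∧ y ∉ L ∧ g = a * y * a⁻¹ := by
    intro g hgN
    have hcards : Fintype.card G ≤ (S ∪ (N : Set G).toFinset).card := by
      have hdisj : Disjoint S (N : Set G).toFinset := by
        rw [Finset.disjoint_left]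
        intro x hx hx2
        exact hSN x hx (by simpa using hx2)
      rw [Finset.card_union_of_disjoint hdisj]
      have e1 : (H : Set G).toFinset.card = Nat.card H := by
        rw [Set.toFinset_card, Nat.card_eq_fintype_card]; rfl
      have e2 : (L : Set G).toFinset.card = Nat.card L := by
        rw [Set.toFinset_card, Nat.card_eq_fintype_card]; rfl
      have e3 : (N : Set G).toFinset.card = Nat.card N := by
        rw [Set.toFinset_card, Nat.card_eq_fintype_card]; rfl
      have lagrange : Fintype.card G = Fintype.card (G ⧸ H) * Nat.card H := by
        rw [← Nat.card_eq_fintype_card (α := G),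
          Subgroup.card_eq_card_quotient_mul_card_subgroup H, Nat.card_eq_fintype_card]
      have hln : Fintype.card (G ⧸ H) * Nat.card L ≤ Nat.card N := by
        have hpos : 0 < Nat.card H := Nat.card_pos
        have : Nat.card H * (Fintype.card (G ⧸ H) * Nat.card L) ≤ Nat.card H * Nat.card N := by
          calc Nat.card H * (Fintype.card (G ⧸ H) * Nat.card L)
              = Fintype.card G * Nat.card L := by rw [lagrange]; ring
            _ ≤ Nat.card H * Nat.card N := cardHN
        exact Nat.le_of_mul_le_mul_left this hpos
      have hle : Nat.card L ≤ Nat.card H :=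
        Nat.card_le_card_of_injective _ (Subgroup.inclusion_injective hLleH)
      rw [e1, e2, Nat.mul_sub] at hScard
      rw [e3]
      omega
    have huniv : S ∪ (N : Set G).toFinset = Finset.univ :=
      Finset.eq_univ_of_card _ (le_antisymm (Finset.card_le_univ _)
        (by simpa using hcards))
    have : g ∈ S ∪ (N : Set G).toFinset := huniv ▸ Finset.mem_univ g
    rcases Finset.mem_union.1 this with hgS | hgN'
    · exact (memS g).1 hgS
    · exact absurd (by simpa using hgN') hgN
  -- M ≤ N
  have hMN : M ≤ N := by
    intro m hm
    by_contra hmN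
    obtain ⟨a, y, hyH, hyL, heq⟩ := key m hmN
    have hyM : y ∈ M := by
      have : a⁻¹ * m * a⁻¹⁻¹ ∈ M := hM.conj_mem m hm a⁻¹
      have hy : a⁻¹ * m * a = y := by rw [heq]; group
      simpa [hy, inv_inv, mul_assoc] using this
    have : y ∈ H ⊓ M := Subgroup.mem_inf.2 ⟨hyH, hyM⟩
    rw [hHM, Subgroup.mem_bot] at this
    exact hyL (this ▸ L.one_mem)
  -- part 3: trivial centralizers in M
  have part3 : ∀ g : G, g ∉ N → ∀ x ∈ M, g * x = x * g → x = 1 := by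
    intro g hgN x hxM hcomm
    obtain ⟨a, y, hyH, hyL, rfl⟩ := key g hgN
    set x' := a⁻¹ * x * a with hx'
    have hx'M : x' ∈ M := by
      have : a⁻¹ * x * a⁻¹⁻¹ ∈ M := hM.conj_mem x hxM a⁻¹
      simpa [hx', inv_inv] using this
    have hcomm' : y * x' = x' * y := by
      have := hcomm
      have h2 : a * y * a⁻¹ * x * (a * y * a⁻¹)⁻¹ = x := by
        rw [hcomm]; group
      have : y * (a⁻¹ * x * a) * y⁻¹ = a⁻¹ * x * a := by
        have := congrArg (fun z => a⁻¹ * z * a) h2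
        simpa [mul_assoc] using this
      rw [hx']
      calc y * (a⁻¹ * x * a) = (y * (a⁻¹ * x * a) * y⁻¹) * y := by group
        _ = (a⁻¹ * x * a) * y := by rw [this]
    have hx'H : x' ∈ H := by
      by_contra hx'H
      have : x' * y * x'⁻¹ ∈ H := by
        have : x' * y * x'⁻¹ = y := by
          rw [← hcomm']; group
        rw [this]; exact hyH
      exact hyL (hFW x' hx'H y hyH this)
    have : x' ∈ H ⊓ M := Subgroup.mem_inf.2 ⟨hx'H, hx'M⟩
    rw [hHM, Subgroup.mem_bot] at this
    have : x = 1 := by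
      have := congrArg (fun z => a * z * a⁻¹) this
      simpa [hx', mul_assoc] using this
    exact this
  -- nontriviality facts
  have hNbot : N ≠ ⊥ := by
    intro h
    apply hHtop
    rw [Subgroup.eq_top_iff']
    intro g
    obtain ⟨x, hxH, n, hnN, rfl⟩ := hGHN g
    rw [h, Subgroup.mem_bot] at hnN
    simpa [hnN] using hxH
  have hNtop : N ≠ ⊤ := by
    intro h
    rw [h, inf_top_eq] at hHN
    exact hLH.ne' hHN
  have hMbot : M ≠ ⊥ := by
    intro h
    apply hHtop
    rw [Subgroup.eq_top_iff']
    intro g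
    obtain ⟨x, hxH, m, hmM, rfl⟩ := hGHM g
    rw [h, Subgroup.mem_bot] at hmM
    simpa [hmM] using hxH
  have hMtop : M ≠ ⊤ := by
    intro h
    rw [h, inf_top_eq] at hHM
    exact hHbot hHM
  refine ⟨?_, ⟨hN, hM, hNbot, hNtop, hMbot, hMtop, hMN, ?_⟩, part3⟩
  · -- N = L ⊔ M
    apply le_antisymm
    · intro n hnN
      obtain ⟨x, hxH, m, hmM, rfl⟩ := hGHM n
      have hxN : x ∈ N := by
        have : (x * m) * m⁻¹ ∈ N := mul_mem hnN (inv_mem (hMN hmM))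
        simpa [mul_assoc] using this
      have hxL : x ∈ L := hHN ▸ Subgroup.mem_inf.2 ⟨hxH, hxN⟩
      exact mul_mem (Subgroup.mem_sup_left hxL) (Subgroup.mem_sup_right hmM)
    · exact sup_le hLN hMN
  · -- centralizer condition
    intro x hxM hx1 g hg
    by_contra hgN
    have hcomm : g * x = x * g := by
      have := (Subgroup.mem_centralizer_iff.1 hg) x (Set.mem_singleton x)
      exact this.symm
    exact hx1 (part3 g hgN x hxM hcomm)
end

section
/- Let M and N be nontrivial proper normal subgroups of a finite group G with M ≤ N, and let H ≤ G satisfy G = HM and H ∩ M = 1. Then (G,N,M) is a Frobenius triple if and only if N_G(X) ≤ H for every subgroup X ≤ H with X not contained in N. -/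
namespace Subgroup

variable {G : Type*} [Group G] {H M : Subgroup G}

theorem commute_of_disjoint_of_conj_mem (hM : M.Normal) (hHM : Disjoint H M) {m y : G}
    (hm : m ∈ M) (hy : y ∈ H) (hconj : m * y * m⁻¹ ∈ H) : Commute m y := by
  rw [← commutatorElement_eq_one_iff_commute]
  refine disjoint_def.mp hHM (H.mul_mem hconj (H.inv_mem hy)) ?_
  rw [commutatorElement_def, mul_assoc, mul_assoc]
  exact M.mul_mem hm (by simpa [mul_assoc] using hM.conj_mem _ (M.inv_mem hm) y)

theorem mem_normalizer_zpowers_of_commute {c h : G} (hc : Commute c h) :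
    c ∈ normalizer (zpowers h : Set G) := by
  refine centralizer_le_normalizer _ ?_
  rw [zpowers_eq_closure, centralizer_closure, mem_centralizer_singleton_iff]
  exact hc.eq

/-- The map `a ↦ h⁻¹ * a⁻¹ * h * a` on `M` is injective, hence onto. -/
theorem exists_mem_conj_mul_eq [Finite M] (hM : M.Normal) {h : G}
    (hh : ∀ c ∈ M, Commute c h → c = 1) {m : G} (hm : m ∈ M) :
    ∃ t ∈ M, t * (h * m) * t⁻¹ = h := by
  let f : M → M := fun a =>
    ⟨h⁻¹ * (a : G)⁻¹ * h * a, M.mul_mem (by simpa using hM.conj_mem _ (M.inv_mem a.2) h⁻¹) a.2⟩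
  have hf : Function.Injective f := by
    intro a b hab
    have hconj : (a : G)⁻¹ * h * a = (b : G)⁻¹ * h * b := by
      simpa [f, mul_assoc] using congrArg Subtype.val hab
    have hcomm : Commute ((b : G) * (a : G)⁻¹) h := by
      calc (b : G) * (a : G)⁻¹ * h = (b : G) * ((a : G)⁻¹ * h * a) * (a : G)⁻¹ := by group
        _ = (b : G) * ((b : G)⁻¹ * h * b) * (a : G)⁻¹ := by rw [hconj]
        _ = h * ((b : G) * (a : G)⁻¹) := by group
    exact Subtype.ext (mul_inv_eq_one.mp (hh _ (M.mul_mem b.2 (M.inv_mem a.2)) hcomm)).symm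
  obtain ⟨⟨t, ht⟩, hft⟩ := (Finite.injective_iff_surjective.mp hf) ⟨m, hm⟩
  refine ⟨t, ht, ?_⟩
  have hmt : h⁻¹ * t⁻¹ * h * t = m := congrArg Subtype.val hft
  rw [← hmt]
  group

theorem eq_one_of_commute_mul [Finite M] (hM : M.Normal) {h : G}
    (hh : ∀ c ∈ M, Commute c h → c = 1) {m x : G} (hm : m ∈ M) (hx : x ∈ M)
    (hxg : Commute x (h * m)) : x = 1 := by
  obtain ⟨t, -, ht⟩ := exists_mem_conj_mul_eq hM hh hm
  have hconj : Commute (t * x * t⁻¹) h := by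
    rw [← ht]
    exact hxg.map (MulAut.conj t).toMonoidHom
  simpa using hh _ (hM.conj_mem x hx t) hconj

end Subgroup

theorem frobenius_triple_iff_normalizers {G : Type*} [Group G] [Fintype G]
    (N M : Subgroup G) (hM : M.Normal) (hN : N.Normal)
    (hMbot : M ≠ ⊥) (hMtop : M ≠ ⊤) (hNbot : N ≠ ⊥) (hNtop : N ≠ ⊤) (hMN : M ≤ N)
    (H : Subgroup G) (hGHM : ∀ g : G, ∃ h ∈ H, ∃ m ∈ M, g = h * m) (hHM : H ⊓ M = ⊥) :
    IsFrobeniusTriple N M ↔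
      ∀ X : Subgroup G, X ≤ H → ¬ X ≤ N → Subgroup.normalizer (X : Set G) ≤ H := by
  have hdisj : Disjoint H M := disjoint_iff.mpr hHM
  constructor
  · rintro ⟨-, -, -, -, -, -, -, hcent⟩ X hXH hXN g hg
    obtain ⟨h, hh, m, hm, rfl⟩ := hGHM g
    obtain ⟨y, hyX, hyN⟩ := SetLike.not_le_iff_exists.mp hXN
    have hconj : m * y * m⁻¹ ∈ H := by
      have hgy := hXH ((Subgroup.mem_normalizer_iff.mp hg y).mp hyX)
      convert H.mul_mem (H.mul_mem (H.inv_mem hh) hgy) hh using 1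
      group
    have hmy := Subgroup.commute_of_disjoint_of_conj_mem hM hdisj hm (hXH hyX) hconj
    by_cases hm1 : m = 1
    · simpa [hm1] using hh
    · exact absurd (hcent m hm hm1 (Subgroup.mem_centralizer_singleton_iff.mpr hmy.eq.symm)) hyN
  · intro hnorm
    refine ⟨hN, hM, hNbot, hNtop, hMbot, hMtop, hMN, fun x hx hx1 g hg => ?_⟩
    by_contra hgN
    obtain ⟨h, hh, m, hm, rfl⟩ := hGHM g
    have hhN : h ∉ N := fun hhN => hgN (N.mul_mem hhN (hMN hm))
    have hCh : ∀ c ∈ M, Commute c h → c = 1 := fun c hc hch =>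
      Subgroup.disjoint_def.mp hdisj
        (hnorm _ (Subgroup.zpowers_le.mpr hh) (fun hle => hhN (hle (Subgroup.mem_zpowers h)))
          (Subgroup.mem_normalizer_zpowers_of_commute hch)) hc
    exact hx1 (Subgroup.eq_one_of_commute_mul hM hCh hm hx
      (Subgroup.mem_centralizer_singleton_iff.mp hg).symm)
end

section
/- Let L₁ and L₂ be normal subgroups of a finite group G. Then the subgroup generated by the centralizers C_G(x) of all nonidentity elements x of the product L₁L₂ equals the subgroup generated by the centralizers C_G(x) of all nonidentity elements x of L₁ ∪ L₂; that is, ⟨C_G(x) : 1 ≠ x ∈ L₁L₂⟩ = ⟨C_G(x) : 1 ≠ x ∈ L₁ ∪ L₂⟩. -/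
open scoped Pointwise

theorem centralizers_join_eq_centralizers_union {G : Type*} [Group G] [Fintype G]
    (L₁ L₂ : Subgroup G) (h₁ : L₁.Normal) (h₂ : L₂.Normal) :
    (⨆ x ∈ {x : G | x ∈ L₁ ⊔ L₂ ∧ x ≠ 1}, Subgroup.centralizer {x}) =
      ⨆ x ∈ {x : G | (x ∈ L₁ ∨ x ∈ L₂) ∧ x ≠ 1}, Subgroup.centralizer {x} := by
  haveI := h₂
  have hN : ∀ y : G, (y ∈ L₁ ∨ y ∈ L₂) → y ≠ 1 →
      Subgroup.centralizer {y} ≤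
        ⨆ x ∈ {x : G | (x ∈ L₁ ∨ x ∈ L₂) ∧ x ≠ 1}, Subgroup.centralizer {x} := by
    intro y hy hy1
    exact le_iSup₂ (f := fun x (_ : x ∈ {x : G | (x ∈ L₁ ∨ x ∈ L₂) ∧ x ≠ 1}) =>
      Subgroup.centralizer {x}) y ⟨hy, hy1⟩
  apply le_antisymm
  · apply iSup₂_le
    rintro x ⟨hx, hx1⟩
    have hx' : x ∈ (L₁ : Set G) * (L₂ : Set G) := by
      rw [← Subgroup.mul_normal L₁ L₂]; exact hx
    obtain ⟨a, ha, b, hb, hab⟩ := hx'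
    simp only at hab
    intro g hgmem
    have hg : g * x = x * g := Subgroup.mem_centralizer_singleton_iff.mp hgmem
    have hconj : g⁻¹ * (a * b) * g = a * b := by
      rw [hab, mul_assoc, ← hg]; group
    set d : G := a⁻¹ * (g⁻¹ * a * g) with hd_def
    have hd2 : d = b * (g⁻¹ * b⁻¹ * g) := by
      have h1 : d = a⁻¹ * (g⁻¹ * (a * b) * g) * (g⁻¹ * b⁻¹ * g) := by
        rw [hd_def]; group
      rw [h1, hconj]; group
    have conjL₁ : ∀ c : G, c ∈ L₁ → g⁻¹ * c * g ∈ L₁ := by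
      intro c hc
      have := h₁.conj_mem c hc g⁻¹
      simpa using this
    have conjL₂ : ∀ c : G, c ∈ L₂ → g⁻¹ * c * g ∈ L₂ := by
      intro c hc
      have := h₂.conj_mem c hc g⁻¹
      simpa using this
    have hdL₁ : d ∈ L₁ := mul_mem (inv_mem ha) (conjL₁ a ha)
    have hdL₂ : d ∈ L₂ := by
      rw [hd2]; exact mul_mem hb (conjL₂ b⁻¹ (inv_mem hb))
    have hfmem : ∀ u : ↥(L₁ ⊓ L₂), (u : G)⁻¹ * (g⁻¹ * u * g) ∈ L₁ ⊓ L₂ := by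
      intro u
      obtain ⟨hu1, hu2⟩ := Subgroup.mem_inf.mp u.2
      exact Subgroup.mem_inf.mpr ⟨mul_mem (inv_mem hu1) (conjL₁ u hu1),
        mul_mem (inv_mem hu2) (conjL₂ u hu2)⟩
    set f : ↥(L₁ ⊓ L₂) → ↥(L₁ ⊓ L₂) := fun u => ⟨(u : G)⁻¹ * (g⁻¹ * u * g), hfmem u⟩
      with hf_def
    by_cases hinj : Function.Injective f
    · -- injective hence surjective: find u with u⁻¹ * u^g = d
      obtain ⟨u, hu⟩ := (Finite.injective_iff_surjective.mp hinj)
        ⟨d, Subgroup.mem_inf.mpr ⟨hdL₁, hdL₂⟩⟩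
      have hu' : (u : G)⁻¹ * (g⁻¹ * u * g) = d := congrArg Subtype.val hu
      have hug : g⁻¹ * u * g = (u : G) * d := by
        rw [← hu']; group
      have hag : g⁻¹ * a * g = a * d := by rw [hd_def]; group
      have ha' : g⁻¹ * (a * (u : G)⁻¹) * g = a * (u : G)⁻¹ := by
        have h3 : g⁻¹ * (a * (u : G)⁻¹) * g = (g⁻¹ * a * g) * (g⁻¹ * u * g)⁻¹ := by group
        rw [h3, hug, hag]; group
      have hcomm : g * (a * (u : G)⁻¹) = (a * (u : G)⁻¹) * g := by
        have h4 : (a * (u : G)⁻¹) * g = g * (g⁻¹ * (a * (u : G)⁻¹) * g) := by group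
        rw [ha'] at h4; exact h4.symm
      have hu1 : (u : G) ∈ L₁ := (Subgroup.mem_inf.mp u.2).1
      have hu2 : (u : G) ∈ L₂ := (Subgroup.mem_inf.mp u.2).2
      by_cases hau : a * (u : G)⁻¹ = 1
      · -- then x = u * b ∈ L₂
        have hxL₂ : x ∈ L₂ := by
          rw [mul_inv_eq_one] at hau
          rw [← hab, hau]
          exact mul_mem hu2 hb
        exact hN x (Or.inr hxL₂) hx1 hgmem
      · exact hN (a * (u : G)⁻¹) (Or.inl (mul_mem ha (inv_mem hu1))) hau
          (Subgroup.mem_centralizer_singleton_iff.mpr hcomm)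
    · -- not injective: a nontrivial element of L₁ ⊓ L₂ commutes with g
      rw [Function.not_injective_iff] at hinj
      obtain ⟨u, v, huv, hne⟩ := hinj
      have huv' : (u : G)⁻¹ * (g⁻¹ * u * g) = (v : G)⁻¹ * (g⁻¹ * v * g) :=
        congrArg Subtype.val huv
      have he1 : (v : G) * (u : G)⁻¹ ≠ 1 := by
        simp only [Ne, mul_inv_eq_one]
        intro h
        exact hne (Subtype.ext h.symm)
      have heg : g⁻¹ * ((v : G) * (u : G)⁻¹) * g = (v : G) * (u : G)⁻¹ := by
        have h1 : g⁻¹ * (v : G) * g = (v : G) * ((v : G)⁻¹ * (g⁻¹ * v * g)) := by group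
        rw [← huv'] at h1
        have h2 : g⁻¹ * ((v : G) * (u : G)⁻¹) * g
            = (g⁻¹ * (v : G) * g) * (g⁻¹ * (u : G) * g)⁻¹ := by group
        rw [h2, h1]; group
      have hcomm : g * ((v : G) * (u : G)⁻¹) = ((v : G) * (u : G)⁻¹) * g := by
        have h4 : ((v : G) * (u : G)⁻¹) * g
            = g * (g⁻¹ * ((v : G) * (u : G)⁻¹) * g) := by group
        rw [heg] at h4; exact h4.symm
      have heL₁ : (v : G) * (u : G)⁻¹ ∈ L₁ :=
        mul_mem (Subgroup.mem_inf.mp v.2).1 (inv_mem (Subgroup.mem_inf.mp u.2).1)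
      exact hN _ (Or.inl heL₁) he1 (Subgroup.mem_centralizer_singleton_iff.mpr hcomm)
  · apply iSup₂_le
    rintro x ⟨hx, hx1⟩
    have hx' : x ∈ L₁ ⊔ L₂ := by
      rcases hx with h | h
      · exact Subgroup.mem_sup_left h
      · exact Subgroup.mem_sup_right h
    exact le_iSup₂ (f := fun x (_ : x ∈ {x : G | x ∈ L₁ ⊔ L₂ ∧ x ≠ 1}) =>
      Subgroup.centralizer {x}) x ⟨hx', hx1⟩
end

section
/- Let M₁, M₂ and N be normal subgroups of a finite group G with M₁M₂ ≤ N. If (G,N,M₁) and (G,N,M₂) are Frobenius triples, then (G,N,M₁M₂) is a Frobenius triple. -/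
open scoped Pointwise


theorem frobenius_triple_join {G : Type*} [Group G] [Fintype G]
    (M₁ M₂ N : Subgroup G) (hjoin : M₁ ⊔ M₂ ≤ N)
    (h1 : IsFrobeniusTriple N M₁) (h2 : IsFrobeniusTriple N M₂) :
    IsFrobeniusTriple N (M₁ ⊔ M₂) := by
  obtain ⟨hN, hM1, hNbot, hNtop, hM1bot, hM1top, hle1, hC1⟩ := h1
  obtain ⟨-, hM2, -, -, hM2bot, -, hle2, hC2⟩ := h2
  haveI := hM1
  haveI := hM2
  refine ⟨hN, inferInstance, hNbot, hNtop, ?_, ?_, hjoin, ?_⟩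
  · intro h
    exact hM1bot (le_bot_iff.mp (h ▸ le_sup_left))
  · intro h
    exact hNtop (top_le_iff.mp (h ▸ hjoin))
  · intro x hx hx1 g hg
    by_contra hgN
    -- g commutes with x
    have hgx : x * g = g * x := Subgroup.mem_centralizer_iff.mp hg x (Set.mem_singleton x)
    -- fixed point freeness
    have fix1 : ∀ m ∈ M₁, g * m = m * g → m = 1 := by
      intro m hm hcomm
      by_contra hm1
      exact hgN (hC1 m hm hm1 (Subgroup.mem_centralizer_iff.mpr
        (by rintro h ⟨rfl⟩; exact hcomm.symm)))
    have fix2 : ∀ m ∈ M₂, g * m = m * g → m = 1 := by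
      intro m hm hcomm
      by_contra hm1
      exact hgN (hC2 m hm hm1 (Subgroup.mem_centralizer_iff.mpr
        (by rintro h ⟨rfl⟩; exact hcomm.symm)))
    -- decompose x = a * b
    have hx' : x ∈ ((M₁ : Set G) * (M₂ : Set G)) := by
      rw [← Subgroup.mul_normal M₁ M₂]; exact hx
    obtain ⟨a, ha, b, hb, rfl⟩ := hx'
    -- injectivity of m ↦ m⁻¹ * g * m * g⁻¹ on M₁
    have inj : ∀ a₁ ∈ M₁, ∀ a₂ ∈ M₁,
        a₁⁻¹ * (g * a₁ * g⁻¹) = a₂⁻¹ * (g * a₂ * g⁻¹) → a₁ = a₂ := by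
      intro a₁ h₁ a₂ h₂ heq
      have h3 : a₁⁻¹ * (g * a₁) = a₂⁻¹ * (g * a₂) := by
        calc a₁⁻¹ * (g * a₁) = (a₁⁻¹ * (g * a₁ * g⁻¹)) * g := by group
          _ = (a₂⁻¹ * (g * a₂ * g⁻¹)) * g := by rw [heq]
          _ = a₂⁻¹ * (g * a₂) := by group
      have hcomm : g * (a₂ * a₁⁻¹) = (a₂ * a₁⁻¹) * g := by
        have h4 : a₂ * (a₁⁻¹ * (g * a₁)) * a₁⁻¹ = a₂ * (a₂⁻¹ * (g * a₂)) * a₁⁻¹ := by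
          rw [h3]
        calc g * (a₂ * a₁⁻¹) = a₂ * (a₂⁻¹ * (g * a₂)) * a₁⁻¹ := by group
          _ = a₂ * (a₁⁻¹ * (g * a₁)) * a₁⁻¹ := h4.symm
          _ = (a₂ * a₁⁻¹) * g := by group
      have : a₂ * a₁⁻¹ = 1 := fix1 _ (mul_mem h₂ (inv_mem h₁)) hcomm
      · exact (mul_inv_eq_one.mp this).symm
    -- the key element t
    set D := M₁ ⊓ M₂ with hD
    have key : (g * a * g⁻¹) * (g * b * g⁻¹) = a * b := by
      have h5 : (g * a * g⁻¹) * (g * b * g⁻¹) = g * (a * b) * g⁻¹ := by group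
      rw [h5, ← hgx]; group
    have t2 : a⁻¹ * (g * a * g⁻¹) = b * (g * b * g⁻¹)⁻¹ := by
      have hL : a * ((a⁻¹ * (g * a * g⁻¹)) * (g * b * g⁻¹)) = a * b := by
        calc a * ((a⁻¹ * (g * a * g⁻¹)) * (g * b * g⁻¹))
            = (g * a * g⁻¹) * (g * b * g⁻¹) := by group
          _ = a * b := key
      have hR : a * ((b * (g * b * g⁻¹)⁻¹) * (g * b * g⁻¹)) = a * b := by group
      exact mul_right_cancel (mul_left_cancel (hL.trans hR.symm))
    have htD : a⁻¹ * (g * a * g⁻¹) ∈ D := by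
      refine Subgroup.mem_inf.mpr ⟨?_, ?_⟩
      · exact mul_mem (inv_mem ha) (hM1.conj_mem a ha g)
      · rw [t2]
        exact mul_mem hb (inv_mem (hM2.conj_mem b hb g))
    -- the map on D
    let f : D → D := fun d => ⟨(d : G)⁻¹ * (g * (d : G) * g⁻¹),
      mul_mem (inv_mem d.2) ⟨hM1.conj_mem _ d.2.1 g, hM2.conj_mem _ d.2.2 g⟩⟩
    have finj : Function.Injective f := by
      intro d₁ d₂ h
      have := congrArg (Subtype.val) h
      exact Subtype.ext (inj d₁ d₁.2.1 d₂ d₂.2.1 this)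
    have fsurj : Function.Surjective f := Finite.surjective_of_injective finj
    obtain ⟨d₀, hd₀⟩ := fsurj ⟨_, htD⟩
    have hd₀' : (d₀ : G)⁻¹ * (g * (d₀ : G) * g⁻¹) = a⁻¹ * (g * a * g⁻¹) :=
      congrArg Subtype.val hd₀
    have haD : a = (d₀ : G) := inj a ha d₀ d₀.2.1 hd₀'.symm
    have haM2 : a ∈ M₂ := haD ▸ d₀.2.2
    have : a * b = 1 := fix2 _ (mul_mem haM2 hb) hgx.symm
    exact hx1 this
end
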